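/- arXiv:1008.5357 — 16 statements merged into one kernel-verified Lean document; each statement's English description precedes it below -/
import Mathlib

section
/- If ≻₁ and ≻₂ are strict partial orders on a universe U of tuples over disjoint attribute sets, then their Pareto accumulation ≻ defined by ≻ = (≻₁ ∩ ≈₂) ∪ (≻₂ ∩ ≈₁) ∪ (≻₁ ∩ ≻₂) is a strict partial order. -/
/-- Pareto accumulation of two strict partial orders over
disjoint attribute sets is a strict partial order. -/
theorem pareto_accumulation_spo
    {ι : Type*} [Fintype ι] {D : ι → Type*}
    (A1 A2 : Set ι) (hdisj : Disjoint A1 A2)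
    (r1 r2 : (∀ i, D i) → (∀ i, D i) → Prop)
    (h1irr : ∀ o, ¬ r1 o o) (h1tr : ∀ a b c, r1 a b → r1 b c → r1 a c)
    (h2irr : ∀ o, ¬ r2 o o) (h2tr : ∀ a b c, r2 a b → r2 b c → r2 a c)
    (h1dep : ∀ o o' p p', (∀ i ∈ A1, o i = p i) → (∀ i ∈ A1, o' i = p' i) →
      (r1 o o' ↔ r1 p p'))
    (h2dep : ∀ o o' p p', (∀ i ∈ A2, o i = p i) → (∀ i ∈ A2, o' i = p' i) →
      (r2 o o' ↔ r2 p p')) :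
    (∀ o, ¬ ((r1 o o ∧ ∀ i ∈ A2, o i = o i) ∨
             (r2 o o ∧ ∀ i ∈ A1, o i = o i) ∨
             (r1 o o ∧ r2 o o))) ∧
    (∀ a b c,
      ((r1 a b ∧ ∀ i ∈ A2, a i = b i) ∨
       (r2 a b ∧ ∀ i ∈ A1, a i = b i) ∨
       (r1 a b ∧ r2 a b)) →
      ((r1 b c ∧ ∀ i ∈ A2, b i = c i) ∨
       (r2 b c ∧ ∀ i ∈ A1, b i = c i) ∨
       (r1 b c ∧ r2 b c)) →
      ((r1 a c ∧ ∀ i ∈ A2, a i = c i) ∨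
       (r2 a c ∧ ∀ i ∈ A1, a i = c i) ∨
       (r1 a c ∧ r2 a c))) := by
  constructor
  · rintro o (⟨h, -⟩ | ⟨h, -⟩ | ⟨h, -⟩)
    · exact h1irr o h
    · exact h2irr o h
    · exact h1irr o h
  · rintro a b c (⟨hab, eab⟩ | ⟨hab, eab⟩ | ⟨hab1, hab2⟩)
      (⟨hbc, ebc⟩ | ⟨hbc, ebc⟩ | ⟨hbc1, hbc2⟩)
    · exact Or.inl ⟨h1tr a b c hab hbc, fun i hi => (eab i hi).trans (ebc i hi)⟩
    · refine Or.inr (Or.inr ⟨?_, ?_⟩)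
      · exact (h1dep a b a c (fun _ _ => rfl) ebc).mp hab
      · exact (h2dep b c a c (fun i hi => (eab i hi).symm) (fun _ _ => rfl)).mp hbc
    · refine Or.inr (Or.inr ⟨h1tr a b c hab hbc1, ?_⟩)
      exact (h2dep b c a c (fun i hi => (eab i hi).symm) (fun _ _ => rfl)).mp hbc2
    · refine Or.inr (Or.inr ⟨?_, ?_⟩)
      · exact (h1dep b c a c (fun i hi => (eab i hi).symm) (fun _ _ => rfl)).mp hbc
      · exact (h2dep a b a c (fun _ _ => rfl) ebc).mp hab
    · exact Or.inr (Or.inl ⟨h2tr a b c hab hbc, fun i hi => (eab i hi).trans (ebc i hi)⟩)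
    · refine Or.inr (Or.inr ⟨?_, h2tr a b c hab hbc2⟩)
      exact (h1dep b c a c (fun i hi => (eab i hi).symm) (fun _ _ => rfl)).mp hbc1
    · refine Or.inr (Or.inr ⟨h1tr a b c hab1 hbc, ?_⟩)
      exact (h2dep a b a c (fun _ _ => rfl) ebc).mp hab2
    · refine Or.inr (Or.inr ⟨?_, h2tr a b c hab2 hbc⟩)
      exact (h1dep a b a c (fun _ _ => rfl) ebc).mp hab1
    · exact Or.inr (Or.inr ⟨h1tr a b c hab1 hbc1, h2tr a b c hab2 hbc2⟩)
end

section
/- Prioritized accumulation of tuple preference relations over disjoint attribute sets is associative: (≻₁ & ≻₂) & ≻₃ equals ≻₁ & (≻₂ & ≻₃) as binary relations. -/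
/-- Prioritized accumulation of a relation `r` whose relevant attributes are `X`
with a relation `r'`. -/
def prioAcc {ι : Type*} {D : ι → Type*} (X : Set ι)
    (r r' : (∀ i, D i) → (∀ i, D i) → Prop) :
    (∀ i, D i) → (∀ i, D i) → Prop :=
  fun o o' => r o o' ∨ ((∀ i ∈ X, o i = o' i) ∧ r' o o')

/-- prioritized accumulation over pairwise disjoint attribute sets is
associative: (≻₁ & ≻₂) & ≻₃ = ≻₁ & (≻₂ & ≻₃). -/
theorem prioAcc_assoc
    {ι : Type*} [Fintype ι] {D : ι → Type*}
    (A1 A2 A3 : Set ι)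
    (h12 : Disjoint A1 A2) (h13 : Disjoint A1 A3) (h23 : Disjoint A2 A3)
    (r1 r2 r3 : (∀ i, D i) → (∀ i, D i) → Prop)
    (h1irr : ∀ o, ¬ r1 o o) (h1tr : ∀ a b c, r1 a b → r1 b c → r1 a c)
    (h2irr : ∀ o, ¬ r2 o o) (h2tr : ∀ a b c, r2 a b → r2 b c → r2 a c)
    (h3irr : ∀ o, ¬ r3 o o) (h3tr : ∀ a b c, r3 a b → r3 b c → r3 a c)
    (h1dep : ∀ o o' p p', (∀ i ∈ A1, o i = p i) → (∀ i ∈ A1, o' i = p' i) →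
      (r1 o o' ↔ r1 p p'))
    (h2dep : ∀ o o' p p', (∀ i ∈ A2, o i = p i) → (∀ i ∈ A2, o' i = p' i) →
      (r2 o o' ↔ r2 p p'))
    (h3dep : ∀ o o' p p', (∀ i ∈ A3, o i = p i) → (∀ i ∈ A3, o' i = p' i) →
      (r3 o o' ↔ r3 p p')) :
    ∀ o o' : ∀ i, D i,
      prioAcc (A1 ∪ A2) (prioAcc A1 r1 r2) r3 o o' ↔
      prioAcc A1 r1 (prioAcc A2 r2 r3) o o' := by
  intro o o'
  simp only [prioAcc, Set.mem_union]
  constructor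
  · rintro ((h | ⟨h1, h2⟩) | ⟨h12, h3⟩)
    · exact Or.inl h
    · exact Or.inr ⟨h1, Or.inl h2⟩
    · exact Or.inr ⟨fun i hi => h12 i (Or.inl hi),
        Or.inr ⟨fun i hi => h12 i (Or.inr hi), h3⟩⟩
  · rintro (h | ⟨h1, (h2 | ⟨h2, h3⟩)⟩)
    · exact Or.inl (Or.inl h)
    · exact Or.inl (Or.inr ⟨h1, h2⟩)
    · exact Or.inr ⟨fun i hi => hi.elim (h1 i) (h2 i), h3⟩
end

section
/- Pareto accumulation of tuple preference relations over disjoint attribute sets is commutative and associative as a binary operation on such relations. -/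
/-- Pareto accumulation of `r1` (relevant attributes `X1`) and `r2`
(relevant attributes `X2`). -/
def paretoAcc {ι : Type*} {D : ι → Type*} (X1 X2 : Set ι)
    (r1 r2 : (∀ i, D i) → (∀ i, D i) → Prop) :
    (∀ i, D i) → (∀ i, D i) → Prop :=
  fun o o' =>
    (r1 o o' ∧ ∀ i ∈ X2, o i = o' i) ∨
    (r2 o o' ∧ ∀ i ∈ X1, o i = o' i) ∨
    (r1 o o' ∧ r2 o o')

/-- Pareto accumulation over pairwise disjoint attribute sets is
commutative and associative. -/
theorem paretoAcc_comm_assoc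
    {ι : Type*} [Fintype ι] {D : ι → Type*}
    (A1 A2 A3 : Set ι)
    (h12 : Disjoint A1 A2) (h13 : Disjoint A1 A3) (h23 : Disjoint A2 A3)
    (r1 r2 r3 : (∀ i, D i) → (∀ i, D i) → Prop)
    (h1irr : ∀ o, ¬ r1 o o) (h1tr : ∀ a b c, r1 a b → r1 b c → r1 a c)
    (h2irr : ∀ o, ¬ r2 o o) (h2tr : ∀ a b c, r2 a b → r2 b c → r2 a c)
    (h3irr : ∀ o, ¬ r3 o o) (h3tr : ∀ a b c, r3 a b → r3 b c → r3 a c)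
    (h1dep : ∀ o o' p p', (∀ i ∈ A1, o i = p i) → (∀ i ∈ A1, o' i = p' i) →
      (r1 o o' ↔ r1 p p'))
    (h2dep : ∀ o o' p p', (∀ i ∈ A2, o i = p i) → (∀ i ∈ A2, o' i = p' i) →
      (r2 o o' ↔ r2 p p'))
    (h3dep : ∀ o o' p p', (∀ i ∈ A3, o i = p i) → (∀ i ∈ A3, o' i = p' i) →
      (r3 o o' ↔ r3 p p')) :
    (∀ o o' : ∀ i, D i,
      paretoAcc A1 A2 r1 r2 o o' ↔ paretoAcc A2 A1 r2 r1 o o') ∧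
    (∀ o o' : ∀ i, D i,
      paretoAcc (A1 ∪ A2) A3 (paretoAcc A1 A2 r1 r2) r3 o o' ↔
      paretoAcc A1 (A2 ∪ A3) r1 (paretoAcc A2 A3 r2 r3) o o') := by
  constructor
  · intro o o'; unfold paretoAcc; tauto
  · intro o o'; unfold paretoAcc
    simp only [Set.mem_union, or_imp, forall_and]
    tauto
end

section
/- The p-graph of every p-skyline relation is a strict partial order on the attribute set (irreflexive and transitive as a directed graph relation). -/
/-- p-expressions over attribute set `ι`: atomic attribute preferences combined
by prioritized accumulation (`prio`, &) and Pareto accumulation (`pareto`, ⊗). -/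
inductive PExpr (ι : Type*) where
  | atom : ι → PExpr ι
  | prio : PExpr ι → PExpr ι → PExpr ι
  | pareto : PExpr ι → PExpr ι → PExpr ι

namespace PExpr

/-- Relevant attributes of a p-expression. -/
def vars {ι : Type*} : PExpr ι → Set ι
  | atom i => {i}
  | prio e₁ e₂ => e₁.vars ∪ e₂.vars
  | pareto e₁ e₂ => e₁.vars ∪ e₂.vars

/-- Well-formedness: at every accumulation the relevant attribute sets of the two
arguments are disjoint (so each attribute is used at most once). -/
def wf {ι : Type*} : PExpr ι → Prop
  | atom _ => True
  | prio e₁ e₂ => e₁.wf ∧ e₂.wf ∧ Disjoint e₁.vars e₂.vars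
  | pareto e₁ e₂ => e₁.wf ∧ e₂.wf ∧ Disjoint e₁.vars e₂.vars

/-- Edge set of the p-graph of a p-expression. -/
def edges {ι : Type*} : PExpr ι → Set (ι × ι)
  | atom _ => ∅
  | prio e₁ e₂ => e₁.edges ∪ e₂.edges ∪ e₁.vars ×ˢ e₂.vars
  | pareto e₁ e₂ => e₁.edges ∪ e₂.edges

/-- The tuple preference relation induced by a p-expression. -/
def rel {ι : Type*} {D : ι → Type*} [∀ i, LinearOrder (D i)] :
    PExpr ι → (∀ i, D i) → (∀ i, D i) → Prop
  | atom i, o, o' => o' i < o i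
  | prio e₁ e₂, o, o' =>
      e₁.rel o o' ∨ ((∀ i ∈ e₁.vars, o i = o' i) ∧ e₂.rel o o')
  | pareto e₁ e₂, o, o' =>
      (e₁.rel o o' ∧ ∀ i ∈ e₂.vars, o i = o' i) ∨
      (e₂.rel o o' ∧ ∀ i ∈ e₁.vars, o i = o' i) ∨
      (e₁.rel o o' ∧ e₂.rel o o')

end PExpr

lemma PExpr.edges_sub {ι : Type*} (e : PExpr ι) :
    ∀ p ∈ e.edges, p.1 ∈ e.vars ∧ p.2 ∈ e.vars := by
  induction e with
  | atom i => intro p hp; cases hp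
  | prio e₁ e₂ ih₁ ih₂ =>
      rintro p ((h | h) | h)
      · exact ⟨Or.inl (ih₁ p h).1, Or.inl (ih₁ p h).2⟩
      · exact ⟨Or.inr (ih₂ p h).1, Or.inr (ih₂ p h).2⟩
      · exact ⟨Or.inl h.1, Or.inr h.2⟩
  | pareto e₁ e₂ ih₁ ih₂ =>
      rintro p (h | h)
      · exact ⟨Or.inl (ih₁ p h).1, Or.inl (ih₁ p h).2⟩
      · exact ⟨Or.inr (ih₂ p h).1, Or.inr (ih₂ p h).2⟩

/-- the p-graph of every p-skyline relation is a strict partial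
order on the attribute set (irreflexive and transitive). -/
theorem pGraph_spo {ι : Type*} [Fintype ι] (e : PExpr ι) (hwf : e.wf) :
    (∀ a, (a, a) ∉ e.edges) ∧
    (∀ a b c, (a, b) ∈ e.edges → (b, c) ∈ e.edges → (a, c) ∈ e.edges) := by
  induction e with
  | atom i => exact ⟨fun a h => h.elim, fun a b c h => h.elim⟩
  | prio e₁ e₂ ih₁ ih₂ =>
      obtain ⟨hw₁, hw₂, hd⟩ := hwf
      obtain ⟨irr₁, tr₁⟩ := ih₁ hw₁
      obtain ⟨irr₂, tr₂⟩ := ih₂ hw₂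
      have hdis : ∀ x, x ∈ e₁.vars → x ∈ e₂.vars → False := fun x h1 h2 =>
        Set.disjoint_left.mp hd h1 h2
      constructor
      · rintro a ((h | h) | h)
        · exact irr₁ a h
        · exact irr₂ a h
        · exact hdis a h.1 h.2
      · rintro a b c ((h | h) | h) ((h' | h') | h')
        · exact Or.inl (Or.inl (tr₁ a b c h h'))
        · exact absurd ((e₂.edges_sub _ h').1) (fun hb => hdis b (e₁.edges_sub _ h).2 hb)
        · exact Or.inr ⟨(e₁.edges_sub _ h).1, h'.2⟩
        · exact absurd ((e₁.edges_sub _ h').1) (fun hb => hdis b hb (e₂.edges_sub _ h).2)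
        · exact Or.inl (Or.inr (tr₂ a b c h h'))
        · exact absurd h'.1 (fun hb => hdis b hb (e₂.edges_sub _ h).2)
        · exact absurd ((e₁.edges_sub _ h').1) (fun hb => hdis b hb h.2)
        · exact Or.inr ⟨h.1, (e₂.edges_sub _ h').2⟩
        · exact absurd h'.1 (fun hb => hdis b hb h.2)
  | pareto e₁ e₂ ih₁ ih₂ =>
      obtain ⟨hw₁, hw₂, hd⟩ := hwf
      obtain ⟨irr₁, tr₁⟩ := ih₁ hw₁
      obtain ⟨irr₂, tr₂⟩ := ih₂ hw₂
      have hdis : ∀ x, x ∈ e₁.vars → x ∈ e₂.vars → False := fun x h1 h2 =>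
        Set.disjoint_left.mp hd h1 h2
      constructor
      · rintro a (h | h)
        · exact irr₁ a h
        · exact irr₂ a h
      · rintro a b c (h | h) (h' | h')
        · exact Or.inl (tr₁ a b c h h')
        · exact absurd ((e₂.edges_sub _ h').1) (fun hb => hdis b (e₁.edges_sub _ h).2 hb)
        · exact absurd ((e₁.edges_sub _ h').1) (fun hb => hdis b hb (e₂.edges_sub _ h).2)
        · exact Or.inr (tr₂ a b c h h')
end

section
/- The p-graph of every p-skyline relation satisfies the Envelope property: for all pairwise distinct attributes A, B, C, D, if (A,B), (C,D), and (C,B) are edges of the p-graph, then at least one of (C,A), (A,D), (D,B) is also an edge. -/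
namespace PExpr

lemma mem_vars_of_edges {ι : Type*} (e : PExpr ι) {x y : ι}
    (h : (x, y) ∈ e.edges) : x ∈ e.vars ∧ y ∈ e.vars := by
  induction e with
  | atom i => exact absurd h (Set.notMem_empty _)
  | prio e₁ e₂ ih₁ ih₂ =>
    simp only [edges, vars, Set.mem_union, Set.mem_prod] at h ⊢
    rcases h with (h | h) | h
    · exact ⟨Or.inl (ih₁ h).1, Or.inl (ih₁ h).2⟩
    · exact ⟨Or.inr (ih₂ h).1, Or.inr (ih₂ h).2⟩
    · exact ⟨Or.inl h.1, Or.inr h.2⟩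
  | pareto e₁ e₂ ih₁ ih₂ =>
    simp only [edges, vars, Set.mem_union] at h ⊢
    rcases h with h | h
    · exact ⟨Or.inl (ih₁ h).1, Or.inl (ih₁ h).2⟩
    · exact ⟨Or.inr (ih₂ h).1, Or.inr (ih₂ h).2⟩

end PExpr

/-- the p-graph of every p-skyline relation satisfies the
Envelope property. -/
theorem pGraph_envelope {ι : Type*} [Fintype ι] (e : PExpr ι) (hwf : e.wf) :
    ∀ a b c d : ι, a ≠ b → a ≠ c → a ≠ d → b ≠ c → b ≠ d → c ≠ d →
      (a, b) ∈ e.edges → (c, d) ∈ e.edges → (c, b) ∈ e.edges →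
      ((c, a) ∈ e.edges ∨ (a, d) ∈ e.edges ∨ (d, b) ∈ e.edges) := by
  induction e with
  | atom i =>
    intro a b c d _ _ _ _ _ _ hab _ _
    exact absurd hab (Set.notMem_empty _)
  | prio e₁ e₂ ih₁ ih₂ =>
    obtain ⟨hw₁, hw₂, hdisj⟩ := hwf
    have hd : ∀ x, x ∈ e₁.vars → x ∈ e₂.vars → False := fun x h1 h2 =>
      Set.disjoint_left.mp hdisj h1 h2
    intro a b c d hab hac had hbc hbd hcd h1 h2 h3
    simp only [PExpr.edges, Set.mem_union, Set.mem_prod] at h1 h2 h3 ⊢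
    rcases h1 with (h1 | h1) | h1
    · -- (a,b) ∈ E₁ : a,b ∈ V₁
      obtain ⟨ha1, hb1⟩ := e₁.mem_vars_of_edges h1
      -- (c,b): b ∈ V₁ so must be in E₁
      rcases h3 with (h3 | h3) | h3
      · have hc1 := (e₁.mem_vars_of_edges h3).1
        rcases h2 with (h2 | h2) | h2
        · -- all in E₁, use IH
          rcases ih₁ hw₁ a b c d hab hac had hbc hbd hcd h1 h2 h3 with h | h | h
          · exact Or.inl (Or.inl (Or.inl h))
          · exact Or.inr (Or.inl (Or.inl (Or.inl h)))
          · exact Or.inr (Or.inr (Or.inl (Or.inl h)))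
        · exact absurd (e₂.mem_vars_of_edges h2).1 (fun h => hd c hc1 h)
        · -- (c,d) cross: d ∈ V₂, so (a,d) cross
          exact Or.inr (Or.inl (Or.inr ⟨ha1, h2.2⟩))
      · exact absurd (e₂.mem_vars_of_edges h3).2 (fun h => hd b hb1 h)
      · exact absurd h3.2 (fun h => hd b hb1 h)
    · -- (a,b) ∈ E₂ : a,b ∈ V₂
      obtain ⟨ha2, hb2⟩ := e₂.mem_vars_of_edges h1
      rcases h3 with (h3 | h3) | h3
      · exact absurd (e₁.mem_vars_of_edges h3).2 (fun h => hd b h hb2)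
      · -- (c,b) ∈ E₂, c ∈ V₂
        have hc2 := (e₂.mem_vars_of_edges h3).1
        rcases h2 with (h2 | h2) | h2
        · exact absurd (e₁.mem_vars_of_edges h2).1 (fun h => hd c h hc2)
        · rcases ih₂ hw₂ a b c d hab hac had hbc hbd hcd h1 h2 h3 with h | h | h
          · exact Or.inl (Or.inl (Or.inr h))
          · exact Or.inr (Or.inl (Or.inl (Or.inr h)))
          · exact Or.inr (Or.inr (Or.inl (Or.inr h)))
        · exact absurd h2.1 (fun h => hd c h hc2)
      · -- (c,b) cross: c ∈ V₁, so (c,a) cross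
        exact Or.inl (Or.inr ⟨h3.1, ha2⟩)
    · -- (a,b) cross: a ∈ V₁, b ∈ V₂
      obtain ⟨ha1, hb2⟩ := h1
      rcases h2 with (h2 | h2) | h2
      · -- (c,d) ∈ E₁: d ∈ V₁, so (d,b) cross
        exact Or.inr (Or.inr (Or.inr ⟨(e₁.mem_vars_of_edges h2).2, hb2⟩))
      · -- (c,d) ∈ E₂: d ∈ V₂, so (a,d) cross
        exact Or.inr (Or.inl (Or.inr ⟨ha1, (e₂.mem_vars_of_edges h2).2⟩))
      · -- (c,d) cross: d ∈ V₂, so (a,d) cross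
        exact Or.inr (Or.inl (Or.inr ⟨ha1, h2.2⟩))
  | pareto e₁ e₂ ih₁ ih₂ =>
    obtain ⟨hw₁, hw₂, hdisj⟩ := hwf
    have hd : ∀ x, x ∈ e₁.vars → x ∈ e₂.vars → False := fun x h1 h2 =>
      Set.disjoint_left.mp hdisj h1 h2
    intro a b c d hab hac had hbc hbd hcd h1 h2 h3
    simp only [PExpr.edges, Set.mem_union] at h1 h2 h3 ⊢
    rcases h1 with h1 | h1
    · obtain ⟨_, hb1⟩ := e₁.mem_vars_of_edges h1
      rcases h3 with h3 | h3
      · have hc1 := (e₁.mem_vars_of_edges h3).1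
        rcases h2 with h2 | h2
        · rcases ih₁ hw₁ a b c d hab hac had hbc hbd hcd h1 h2 h3 with h | h | h
          · exact Or.inl (Or.inl h)
          · exact Or.inr (Or.inl (Or.inl h))
          · exact Or.inr (Or.inr (Or.inl h))
        · exact absurd (e₂.mem_vars_of_edges h2).1 (fun h => hd c hc1 h)
      · exact absurd (e₂.mem_vars_of_edges h3).2 (fun h => hd b hb1 h)
    · obtain ⟨_, hb2⟩ := e₂.mem_vars_of_edges h1
      rcases h3 with h3 | h3
      · exact absurd (e₁.mem_vars_of_edges h3).2 (fun h => hd b h hb2)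
      · have hc2 := (e₂.mem_vars_of_edges h3).1
        rcases h2 with h2 | h2
        · exact absurd (e₁.mem_vars_of_edges h2).1 (fun h => hd c h hc2)
        · rcases ih₂ hw₂ a b c d hab hac had hbc hbd hcd h1 h2 h3 with h | h | h
          · exact Or.inl (Or.inr h)
          · exact Or.inr (Or.inl (Or.inr h))
          · exact Or.inr (Or.inr (Or.inr h))
end

section
/- Every directed graph on a finite node set that is a strict partial order and satisfies the Envelope property is the p-graph of some p-skyline relation. -/
open Relation Finset

namespace PExpr

variable {ι : Type*}

def IsPGraphOn (r : ι → ι → Prop) (s : Set ι) : Prop :=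
  ∃ e : PExpr ι, e.wf ∧ e.vars = s ∧ e.edges = {p | p.1 ∈ s ∧ p.2 ∈ s ∧ r p.1 p.2}

variable {r : ι → ι → Prop} {A B : Set ι}

theorem isPGraphOn_singleton [Std.Irrefl r] (i : ι) : IsPGraphOn r {i} := by
  refine ⟨atom i, trivial, rfl, ?_⟩
  ext ⟨a, b⟩
  simp only [edges, Set.mem_empty_iff_false, Set.mem_singleton_iff, Set.mem_ofPred_eq, false_iff]
  rintro ⟨rfl, rfl, h⟩
  exact irrefl_of r _ h

theorem IsPGraphOn.pareto (hA : IsPGraphOn r A) (hB : IsPGraphOn r B) (hAB : Disjoint A B)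
    (hr : ∀ a ∈ A, ∀ b ∈ B, ¬ r a b ∧ ¬ r b a) : IsPGraphOn r (A ∪ B) := by
  obtain ⟨e₁, hwf₁, rfl, he₁⟩ := hA
  obtain ⟨e₂, hwf₂, rfl, he₂⟩ := hB
  refine ⟨pareto e₁ e₂, ⟨hwf₁, hwf₂, hAB⟩, rfl, ?_⟩
  ext ⟨a, b⟩
  simp only [edges, he₁, he₂, Set.mem_union, Set.mem_ofPred_eq]
  constructor
  · rintro (⟨ha, hb, h⟩ | ⟨ha, hb, h⟩) <;> tauto
  · rintro ⟨ha | ha, hb | hb, h⟩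
    exacts [.inl ⟨ha, hb, h⟩, ((hr a ha b hb).1 h).elim, ((hr b hb a ha).2 h).elim,
      .inr ⟨ha, hb, h⟩]

theorem IsPGraphOn.prio (hA : IsPGraphOn r A) (hB : IsPGraphOn r B)
    (hr : ∀ a ∈ A, ∀ b ∈ B, r a b ∧ ¬ r b a) : IsPGraphOn r (A ∪ B) := by
  obtain ⟨e₁, hwf₁, rfl, he₁⟩ := hA
  obtain ⟨e₂, hwf₂, rfl, he₂⟩ := hB
  have hAB : Disjoint e₁.vars e₂.vars := Set.disjoint_left.2 fun a ha hb =>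
    (hr a ha a hb).2 (hr a ha a hb).1
  refine ⟨prio e₁ e₂, ⟨hwf₁, hwf₂, hAB⟩, rfl, ?_⟩
  ext ⟨a, b⟩
  simp only [edges, he₁, he₂, Set.mem_union, Set.mem_prod, Set.mem_ofPred_eq]
  constructor
  · rintro ((⟨ha, hb, h⟩ | ⟨ha, hb, h⟩) | ⟨ha, hb⟩)
    exacts [⟨.inl ha, .inl hb, h⟩, ⟨.inr ha, .inr hb, h⟩, ⟨.inl ha, .inr hb, (hr a ha b hb).1⟩]
  · rintro ⟨ha | ha, hb | hb, h⟩
    exacts [.inl (.inl ⟨ha, hb, h⟩), .inr ⟨ha, hb⟩, ((hr b hb a ha).2 h).elim,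
      .inl (.inr ⟨ha, hb, h⟩)]

end PExpr

section Cograph

variable {ι : Type*} {r : ι → ι → Prop} {s C D : Finset ι} {v : ι}

def P4Free (r : ι → ι → Prop) : Prop :=
  ∀ ⦃a b c d⦄, a ≠ b → a ≠ c → a ≠ d → b ≠ c → b ≠ d → c ≠ d →
    r a b → r b c → r c d → r a c ∨ r b d ∨ r a d

def complRel (r : ι → ι → Prop) (a b : ι) : Prop := a ≠ b ∧ ¬ r a b

instance [Std.Symm r] : Std.Symm (complRel r) :=
  ⟨fun _ _ h => ⟨h.1.symm, fun h' => h.2 (symm_of r h')⟩⟩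

theorem P4Free.complRel [Std.Symm r] (h : P4Free r) : P4Free (complRel r) := by
  intro a b c d hab hac had hbc hbd hcd ⟨_, nab⟩ ⟨_, nbc⟩ ⟨_, ncd⟩
  by_contra! hcon
  obtain ⟨rac, rbd, rad⟩ : r a c ∧ r b d ∧ r a d := by
    simp only [_root_.complRel, not_and, not_not] at hcon
    exact ⟨hcon.1 hac, hcon.2.1 hbd, hcon.2.2 had⟩
  rcases h hac.symm hcd hbc.symm had hab hbd.symm (symm_of r rac) rad (symm_of r rbd)
    with h | h | h
  exacts [ncd h, nab h, nbc (symm_of r h)]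

def IsClosedIn (r : ι → ι → Prop) (s C : Finset ι) : Prop :=
  ∀ a ∈ C, ∀ b ∈ s, b ∉ C → ¬ r a b

def IsDisconnectedOn (r : ι → ι → Prop) (s : Finset ι) : Prop :=
  ∃ C ⊂ s, C.Nonempty ∧ IsClosedIn r s C

theorem IsClosedIn.of_complRel (h : IsClosedIn (complRel r) s C) {a b : ι} (ha : a ∈ C)
    (hb : b ∈ s) (hbC : b ∉ C) : r a b := by
  by_contra hab
  exact h a ha b hb hbC ⟨ne_of_mem_of_not_mem ha hbC, hab⟩

theorem IsDisconnectedOn.of_complRel_complRel (h : IsDisconnectedOn (complRel (complRel r)) s) :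
    IsDisconnectedOn r s :=
  let ⟨C, hCs, hC, hcl⟩ := h
  ⟨C, hCs, hC, fun _ ha _ hb hbC hab => hcl.of_complRel ha hb hbC |>.2 hab⟩

variable [DecidableEq ι]

theorem IsClosedIn.sdiff [Std.Symm r] (h : IsClosedIn r s C) : IsClosedIn r s (s \ C) := by
  intro a ha b hb hbC hab
  exact h b (by simpa [hb] using hbC) a (mem_sdiff.1 ha).1 (mem_sdiff.1 ha).2 (symm_of r hab)

/-- The non-neighbours of `v` in `C` form a closed part: an edge `u' u` leaving them would
give the induced path `u' - u - v - z`. -/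
theorem isDisconnectedOn_of_nonadj_of_adj [Std.Symm r] (hP4 : P4Free r) (hv : v ∈ s)
    (hCD : C ∪ D = s.erase v) (hsep : ∀ a ∈ C, ∀ b ∈ D, ¬ r a b) {w z : ι} (hw : w ∈ C)
    (hvw : ¬ r v w) (hz : z ∈ D) (hvz : r v z) : IsDisconnectedOn r s := by
  classical
  have hCs : C ⊆ s.erase v := hCD ▸ subset_union_left
  have hzs : z ∈ s.erase v := hCD ▸ mem_union_right C hz
  refine ⟨C.filter (¬ r v ·), ?_, ⟨w, mem_filter.2 ⟨hw, hvw⟩⟩, ?_⟩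
  · exact ((filter_subset _ _).trans hCs).trans_ssubset (erase_ssubset hv)
  rintro u' hu' u hu hu'u ru'u
  obtain ⟨hu'C, hvu'⟩ := mem_filter.1 hu'
  have huv : u ≠ v := by rintro rfl; exact hvu' (symm_of r ru'u)
  have huC : u ∈ C := by
    rcases mem_union.1 (hCD ▸ mem_erase.2 ⟨huv, hu⟩) with h | h
    exacts [h, (hsep u' hu'C u h ru'u).elim]
  have hvu : r v u := by by_contra h; exact hu'u (mem_filter.2 ⟨huC, h⟩)
  rcases hP4 (ne_of_mem_of_not_mem hu' hu'u) (ne_of_mem_erase (hCs hu'C))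
      (fun h => hvu' (h ▸ hvz)) huv (fun h => hsep u' hu'C z hz (h ▸ ru'u))
      (ne_of_mem_erase hzs).symm ru'u (symm_of r hvu) hvz with h | h | h
  exacts [hvu' (symm_of r h), hsep u huC z hz h, hsep u' hu'C z hz h]

theorem isDisconnectedOn_or_complRel_of_erase [Std.Symm r] (hP4 : P4Free r) (hv : v ∈ s)
    (h : IsDisconnectedOn r (s.erase v)) :
    IsDisconnectedOn r s ∨ IsDisconnectedOn (complRel r) s := by
  obtain ⟨C, hCt, hC, hCcl⟩ := h
  by_contra! hcon
  obtain ⟨hr, hc⟩ := hcon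
  have hadj : ∀ E ⊆ s.erase v, E.Nonempty → IsClosedIn r (s.erase v) E → ∃ z ∈ E, r v z := by
    intro E hEt hE hEcl
    by_contra! hvE
    refine hr ⟨E, hEt.trans_ssubset (erase_ssubset hv), hE, ?_⟩
    intro a ha b hb hbE hab
    obtain rfl | hbv := eq_or_ne b v
    · exact hvE a ha (symm_of r hab)
    · exact hEcl a ha b (mem_erase.2 ⟨hbv, hb⟩) hbE hab
  obtain ⟨w, hw, hvw⟩ : ∃ w ∈ s.erase v, ¬ r v w := by
    by_contra! hvw
    obtain ⟨x, hx⟩ := hC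
    refine hc ⟨{v}, ?_, singleton_nonempty v, ?_⟩
    · exact ssubset_iff_of_subset (singleton_subset_iff.2 hv) |>.2
        ⟨x, (hCt.subset hx |> mem_of_mem_erase), by simpa using ne_of_mem_erase (hCt.subset hx)⟩
    · intro a ha b hb hbv hab
      rw [mem_singleton.1 ha] at hab
      exact hab.2 (hvw b (mem_erase.2 ⟨by simpa using hbv, hb⟩))
  have hDt : s.erase v \ C ⊆ s.erase v := sdiff_subset
  have hD : (s.erase v \ C).Nonempty := sdiff_nonempty.2 (not_subset_of_ssubset hCt)
  have hsep : ∀ a ∈ C, ∀ b ∈ s.erase v \ C, ¬ r a b := fun a ha b hb =>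
    hCcl a ha b (mem_sdiff.1 hb).1 (mem_sdiff.1 hb).2
  have hsep' : ∀ a ∈ s.erase v \ C, ∀ b ∈ C, ¬ r a b := fun a ha b hb hab =>
    hsep b hb a ha (symm_of r hab)
  by_cases hwC : w ∈ C
  · obtain ⟨z, hz, hvz⟩ := hadj _ hDt hD hCcl.sdiff
    exact hr (isDisconnectedOn_of_nonadj_of_adj hP4 hv (union_sdiff_of_subset hCt.subset) hsep
      hwC hvw hz hvz)
  · obtain ⟨z, hz, hvz⟩ := hadj C hCt.subset hC hCcl
    exact hr (isDisconnectedOn_of_nonadj_of_adj hP4 hv (sdiff_union_of_subset hCt.subset) hsep'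
      (mem_sdiff.2 ⟨hw, hwC⟩) hvw hz hvz)

/-- Seinsche's theorem. -/
theorem isDisconnectedOn_or_complRel [Std.Symm r] (hP4 : P4Free r) (hs : 2 ≤ s.card) :
    IsDisconnectedOn r s ∨ IsDisconnectedOn (complRel r) s := by
  induction s using Finset.strongInduction with
  | H s ih =>
  obtain ⟨v, hv⟩ := card_pos.1 (by omega : 0 < s.card)
  have hcard := card_erase_of_mem hv
  by_cases ht : 2 ≤ (s.erase v).card
  · rcases ih _ (erase_ssubset hv) ht with h | h
    · exact isDisconnectedOn_or_complRel_of_erase hP4 hv h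
    · exact (isDisconnectedOn_or_complRel_of_erase hP4.complRel hv h).symm.imp_left
        IsDisconnectedOn.of_complRel_complRel
  obtain ⟨x, hx⟩ := card_eq_one.1 (by omega : (s.erase v).card = 1)
  have hvs : {v} ⊂ s := ssubset_iff_of_subset (singleton_subset_iff.2 hv) |>.2
    ⟨x, mem_of_mem_erase (hx ▸ mem_singleton_self x),
      by simpa using ne_of_mem_erase (hx ▸ mem_singleton_self x)⟩
  have hbx : ∀ a ∈ ({v} : Finset ι), ∀ b ∈ s, b ∉ ({v} : Finset ι) → a = v ∧ b = x :=
    fun a ha b hb hbv => ⟨mem_singleton.1 ha,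
      mem_singleton.1 (hx ▸ mem_erase.2 ⟨notMem_singleton.1 hbv, hb⟩)⟩
  by_cases hvx : r v x
  · refine .inr ⟨{v}, hvs, singleton_nonempty v, fun a ha b hb hbv hab => ?_⟩
    obtain ⟨rfl, rfl⟩ := hbx a ha b hb hbv
    exact hab.2 hvx
  · refine .inl ⟨{v}, hvs, singleton_nonempty v, fun a ha b hb hbv hab => ?_⟩
    obtain ⟨rfl, rfl⟩ := hbx a ha b hb hbv
    exact hvx hab

end Cograph

section Order

variable {ι : Type*} {r : ι → ι → Prop}

def Envelope (r : ι → ι → Prop) : Prop :=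
  ∀ a b c d, a ≠ b → a ≠ c → a ≠ d → b ≠ c → b ≠ d → c ≠ d →
    r a b → r c d → r c b → r c a ∨ r a d ∨ r d b

theorem Envelope.p4Free_symmGen [IsTrans ι r] (henv : Envelope r) : P4Free (SymmGen r) := by
  intro a b c d hab hac had hbc hbd hcd hab' hbc' hcd'
  rcases hab' with h₁ | h₁ <;> rcases hbc' with h₂ | h₂
  · exact .inl (.of_rel (trans_of r h₁ h₂))
  · rcases hcd' with h₃ | h₃
    · rcases henv a b c d hab hac had hbc hbd hcd h₁ h₃ h₂ with h | h | h
      exacts [.inl (.of_rel_symm h), .inr (.inr (.of_rel h)), .inr (.inl (.of_rel_symm h))]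
    · exact .inr (.inl (.of_rel_symm (trans_of r h₃ h₂)))
  · rcases hcd' with h₃ | h₃
    · exact .inr (.inl (.of_rel (trans_of r h₂ h₃)))
    · rcases henv d c b a hcd.symm hbd.symm had.symm hbc.symm hac.symm hab.symm h₃ h₁ h₂
        with h | h | h
      exacts [.inr (.inl (.of_rel h)), .inr (.inr (.of_rel_symm h)), .inl (.of_rel h)]
  · exact .inl (.of_rel_symm (trans_of r h₂ h₁))

theorem forall_rel_of_minimal [IsTrans ι r] {s C : Finset ι}
    (hC : Minimal (fun D => D.Nonempty ∧ IsClosedIn (complRel (SymmGen r)) s D) C)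
    {x z : ι} (hx : x ∈ C) (hz : z ∈ s) (hzC : z ∉ C) (hzx : r z x) : ∀ c ∈ C, r z c := by
  classical
  -- the elements of `C` below `z` form a closed part as well, hence all of `C`
  have hK : (C.filter (r z ·)).Nonempty ∧
      IsClosedIn (complRel (SymmGen r)) s (C.filter (r z ·)) := by
    refine ⟨⟨x, mem_filter.2 ⟨hx, hzx⟩⟩, ?_⟩
    rintro k hk y hy hyK ⟨hky, hnc⟩
    obtain ⟨hkC, hzk⟩ := mem_filter.1 hk
    by_cases hyC : y ∈ C
    · have hyz : r y z := (hC.prop.2.of_complRel hyC hz hzC).resolve_right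
        fun h => hyK (mem_filter.2 ⟨hyC, h⟩)
      exact hnc (.of_rel_symm (trans_of r hyz hzk))
    · exact hC.prop.2 k hkC y hy hyC ⟨hky, hnc⟩
  exact fun c hc => (mem_filter.1 (hC.2 hK (filter_subset _ _) hc)).2

theorem exists_ssubset_forall_rel [IsTrans ι r] {s : Finset ι}
    (h : IsDisconnectedOn (complRel (SymmGen r)) s) :
    ∃ A ⊂ s, A.Nonempty ∧ ∀ a ∈ A, ∀ b ∈ s, b ∉ A → r a b := by
  classical
  obtain ⟨C₀, hC₀s, hC₀, hC₀cl⟩ := h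
  obtain ⟨C, hCC₀, hC⟩ := exists_minimal_le_of_wellFoundedLT
    (fun D : Finset ι => D.Nonempty ∧ IsClosedIn (complRel (SymmGen r)) s D) C₀ ⟨hC₀, hC₀cl⟩
  obtain ⟨x, hx⟩ := hC.prop.1
  have hxcomp : ∀ y ∈ s, y ∉ C → r x y ∨ r y x := fun y hy hyC =>
    hC.prop.2.of_complRel hx hy hyC
  by_cases hup : ∃ u ∈ s, u ∉ C ∧ r u x
  · obtain ⟨u, hu, huC, hux⟩ := hup
    refine ⟨s.filter fun a => a ∉ C ∧ r a x, ?_, ⟨u, mem_filter.2 ⟨hu, huC, hux⟩⟩, ?_⟩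
    · exact filter_ssubset.2 ⟨x, hC₀s.subset (hCC₀ hx), by simp [hx]⟩
    intro a ha b hb hbA
    obtain ⟨has, haC, hax⟩ := mem_filter.1 ha
    by_cases hbC : b ∈ C
    · exact forall_rel_of_minimal hC hx has haC hax b hbC
    · have hxb : r x b := (hxcomp b hb hbC).resolve_right
        fun h => hbA (mem_filter.2 ⟨hb, hbC, h⟩)
      exact trans_of r hax hxb
  · refine ⟨C, hCC₀.trans_lt hC₀s, ⟨x, hx⟩, fun c hc b hb hbC => ?_⟩
    rw [← symmGen_swap] at hC
    exact forall_rel_of_minimal (r := Function.swap r) hC hx hb hbC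
      ((hxcomp b hb hbC).resolve_right fun h => hup ⟨b, hb, hbC, h⟩) c hc

theorem isPGraphOn_of_envelope [IsStrictOrder ι r] (henv : Envelope r) (s : Finset ι)
    (hs : s.Nonempty) : PExpr.IsPGraphOn r s := by
  classical
  induction s using Finset.strongInduction with
  | H s ih =>
  by_cases hcard : 2 ≤ s.card
  swap
  · obtain ⟨i, rfl⟩ := card_eq_one.1 (show s.card = 1 by have := hs.card_pos; omega)
    simpa using PExpr.isPGraphOn_singleton (r := r) i
  have hsplit : ∀ A ⊂ s, A.Nonempty → PExpr.IsPGraphOn r A ∧ PExpr.IsPGraphOn r ↑(s \ A) ∧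
      (↑A ∪ ↑(s \ A) : Set ι) = s := fun A hAs hA =>
    ⟨ih A hAs hA,
      ih _ (sdiff_ssubset hAs.subset hA) (sdiff_nonempty.2 (not_subset_of_ssubset hAs)),
      by rw [← coe_union, union_sdiff_of_subset hAs.subset]⟩
  rcases isDisconnectedOn_or_complRel henv.p4Free_symmGen hcard with ⟨C, hCs, hC, hCcl⟩ | h
  · obtain ⟨h₁, h₂, hunion⟩ := hsplit C hCs hC
    rw [← hunion]
    refine h₁.pareto h₂ (disjoint_coe.2 disjoint_sdiff) fun a ha b hb => ?_
    have := hCcl a ha b (mem_sdiff.1 hb).1 (mem_sdiff.1 hb).2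
    exact ⟨fun h => this (.of_rel h), fun h => this (.of_rel_symm h)⟩
  · obtain ⟨A, hAs, hA, hcut⟩ := exists_ssubset_forall_rel h
    obtain ⟨h₁, h₂, hunion⟩ := hsplit A hAs hA
    rw [← hunion]
    refine h₁.prio h₂ fun a ha b hb => ?_
    have hab := hcut a ha b (mem_sdiff.1 hb).1 (mem_sdiff.1 hb).2
    exact ⟨hab, asymm_of r hab⟩

end Order

/-- every directed graph on a finite node set that is a strict
partial order and satisfies the Envelope property is the p-graph of some
p-skyline relation (a well-formed p-expression using every attribute). -/
theorem pGraph_of_spo_envelope {ι : Type*} [Fintype ι] [Nonempty ι]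
    (Γ : Set (ι × ι))
    (hirr : ∀ a, (a, a) ∉ Γ)
    (htr : ∀ a b c, (a, b) ∈ Γ → (b, c) ∈ Γ → (a, c) ∈ Γ)
    (henv : ∀ a b c d : ι, a ≠ b → a ≠ c → a ≠ d → b ≠ c → b ≠ d → c ≠ d →
      (a, b) ∈ Γ → (c, d) ∈ Γ → (c, b) ∈ Γ →
      ((c, a) ∈ Γ ∨ (a, d) ∈ Γ ∨ (d, b) ∈ Γ)) :
    ∃ e : PExpr ι, e.wf ∧ e.vars = Set.univ ∧ e.edges = Γ := by
  let r : ι → ι → Prop := fun a b => (a, b) ∈ Γ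
  have : IsStrictOrder ι r := { irrefl := hirr, trans := htr }
  obtain ⟨e, hwf, hvars, hedges⟩ := isPGraphOn_of_envelope henv Finset.univ Finset.univ_nonempty
  refine ⟨e, hwf, by simpa using hvars, ?_⟩
  rw [hedges]
  ext
  simp
end

section
/- Let Γ be a directed graph on at least two nodes satisfying SPO (irreflexivity and transitivity) and the Envelope property. If Γ admits no partition of its node set into two nonempty sets with no edges between them in either direction, then every pair of distinct nodes A, B forms a fork: either there is an edge between A and B (in some direction), or there exists a node C distinct from both with edges from both A and B to C, or edges from C to both A and B. -/
/-- in a finite SPO+Envelope graph with at least two nodes that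
admits no partition into two nonempty parts with no edges between them, every
pair of distinct nodes forms a fork. -/
theorem fork_of_no_separation {V : Type*} [Fintype V]
    (Γ : V → V → Prop)
    (hcard : 2 ≤ Fintype.card V)
    (hirr : ∀ a, ¬ Γ a a)
    (htr : ∀ a b c, Γ a b → Γ b c → Γ a c)
    (henv : ∀ a b c d : V, a ≠ b → a ≠ c → a ≠ d → b ≠ c → b ≠ d → c ≠ d →
      Γ a b → Γ c d → Γ c b → (Γ c a ∨ Γ a d ∨ Γ d b))
    (hnosep : ¬ ∃ N₁ N₂ : Set V, N₁.Nonempty ∧ N₂.Nonempty ∧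
      N₁ ∪ N₂ = Set.univ ∧ Disjoint N₁ N₂ ∧
      ∀ x ∈ N₁, ∀ y ∈ N₂, ¬ Γ x y ∧ ¬ Γ y x) :
    ∀ A B : V, A ≠ B →
      (Γ A B ∨ Γ B A ∨
        ∃ C : V, C ≠ A ∧ C ≠ B ∧ ((Γ A C ∧ Γ B C) ∨ (Γ C A ∧ Γ C B))) := by
  classical
  set adj : V → V → Prop := fun a b => Γ a b ∨ Γ b a with hadjdef
  -- every two nodes are connected in the symmetrized graph
  have hreach : ∀ x y : V, Relation.ReflTransGen adj x y := by
    intro x y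
    by_contra h
    refine hnosep ⟨{z | Relation.ReflTransGen adj x z},
      {z | ¬ Relation.ReflTransGen adj x z},
      ⟨x, Relation.ReflTransGen.refl⟩, ⟨y, h⟩, ?_, ?_, ?_⟩
    · ext z; simp [em]
    · rw [Set.disjoint_left]; intro z hz hz'; exact hz' hz
    · intro u hu v hv
      constructor
      · intro hG; exact hv (hu.tail (Or.inl hG))
      · intro hG; exact hv (hu.tail (Or.inr hG))
  set F : V → V → Prop := fun a b => a = b ∨ Γ a b ∨ Γ b a ∨
    ∃ C : V, C ≠ a ∧ C ≠ b ∧ ((Γ a C ∧ Γ b C) ∨ (Γ C a ∧ Γ C b)) with hFdef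
  have hstep : ∀ a b c : V, F a b → adj b c → F a c := by
    intro a b c hab hbc
    by_cases hac : a = c
    · exact Or.inl hac
    rcases hab with rfl | hAB | hBA | ⟨D, hDa, hDb, hD⟩
    · rcases hbc with h | h
      · exact Or.inr (Or.inl h)
      · exact Or.inr (Or.inr (Or.inl h))
    · rcases hbc with h | h
      · exact Or.inr (Or.inl (htr _ _ _ hAB h))
      · refine Or.inr (Or.inr (Or.inr ⟨b, ?_, ?_, Or.inl ⟨hAB, h⟩⟩))
        · rintro rfl; exact hirr _ hAB
        · rintro rfl; exact hirr _ h
    · rcases hbc with h | h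
      · refine Or.inr (Or.inr (Or.inr ⟨b, ?_, ?_, Or.inr ⟨hBA, h⟩⟩))
        · rintro rfl; exact hirr _ hBA
        · rintro rfl; exact hirr _ h
      · exact Or.inr (Or.inr (Or.inl (htr _ _ _ h hBA)))
    · rcases hD with ⟨haD, hbD⟩ | ⟨hDa', hDb'⟩
      · rcases hbc with h | h
        · -- Γ b c; envelope with (a, D, b, c)
          by_cases hab' : a = b
          · subst hab'; exact Or.inr (Or.inl h)
          by_cases hDc : D = c
          · subst hDc; exact Or.inr (Or.inl haD)
          have hbc' : b ≠ c := by rintro rfl; exact hirr _ h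
          rcases henv a D b c hDa.symm hab' hac hDb hDc hbc' haD h hbD with
            hba | hacE | hcD
          · refine Or.inr (Or.inr (Or.inr ⟨b, ?_, ?_, Or.inr ⟨hba, h⟩⟩))
            · rintro rfl; exact hirr _ hba
            · rintro rfl; exact hirr _ h
          · exact Or.inr (Or.inl hacE)
          · exact Or.inr (Or.inr (Or.inr ⟨D, hDa, hDc, Or.inl ⟨haD, hcD⟩⟩))
        · -- Γ c b
          by_cases hDc : D = c
          · subst hDc; exact Or.inr (Or.inl haD)
          exact Or.inr (Or.inr (Or.inr ⟨D, hDa, hDc, Or.inl ⟨haD, htr _ _ _ h hbD⟩⟩))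
      · rcases hbc with h | h
        · -- Γ b c
          by_cases hDc : D = c
          · subst hDc; exact Or.inr (Or.inr (Or.inl hDa'))
          exact Or.inr (Or.inr (Or.inr ⟨D, hDa, hDc, Or.inr ⟨hDa', htr _ _ _ hDb' h⟩⟩))
        · -- Γ c b; envelope with (c, b, D, a)
          by_cases hcD : c = D
          · subst hcD; exact Or.inr (Or.inr (Or.inl hDa'))
          by_cases hba' : b = a
          · subst hba'; exact Or.inr (Or.inr (Or.inl h))
          have hcb : c ≠ b := by rintro rfl; exact hirr _ h
          rcases henv c b D a hcb hcD (Ne.symm hac) hDb.symm hba' hDa h hDa' hDb' with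
            hDc' | hca | hab
          · refine Or.inr (Or.inr (Or.inr ⟨D, hDa, ?_, Or.inr ⟨hDa', hDc'⟩⟩))
            rintro rfl; exact hirr _ hDc'
          · exact Or.inr (Or.inr (Or.inl hca))
          · refine Or.inr (Or.inr (Or.inr ⟨b, ?_, ?_, Or.inl ⟨hab, h⟩⟩))
            · rintro rfl; exact hirr _ hab
            · rintro rfl; exact hirr _ h
  have hFall : ∀ x y : V, Relation.ReflTransGen adj x y → F x y := by
    intro x y r
    induction r with
    | refl => exact Or.inl rfl
    | tail _ hbc ih => exact hstep _ _ _ ih hbc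
  intro A B hAB
  have hFAB : F A B := hFall A B (hreach A B)
  rcases hFAB with rfl | h
  · exact absurd rfl hAB
  · exact h
end

section
/- Every directed graph on at least two nodes satisfying SPO and the Envelope property admits either a partition of its nodes into nonempty sets N₁, N₂ with no edges between them in either direction, or a partition into nonempty sets N₁, N₂ such that every pair (x,y) with x ∈ N₁, y ∈ N₂ is an edge. -/
/-- every finite SPO+Envelope graph with at least two nodes admits
either a partition into two nonempty parts with no edges between them in either
direction, or a partition into two nonempty parts with all edges from the first
part to the second. -/
theorem separation_of_spo_envelope {V : Type*} [Fintype V]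
    (Γ : V → V → Prop)
    (hcard : 2 ≤ Fintype.card V)
    (hirr : ∀ a, ¬ Γ a a)
    (htr : ∀ a b c, Γ a b → Γ b c → Γ a c)
    (henv : ∀ a b c d : V, a ≠ b → a ≠ c → a ≠ d → b ≠ c → b ≠ d → c ≠ d →
      Γ a b → Γ c d → Γ c b → (Γ c a ∨ Γ a d ∨ Γ d b)) :
    (∃ N₁ N₂ : Set V, N₁.Nonempty ∧ N₂.Nonempty ∧
      N₁ ∪ N₂ = Set.univ ∧ Disjoint N₁ N₂ ∧
      ∀ x ∈ N₁, ∀ y ∈ N₂, ¬ Γ x y ∧ ¬ Γ y x) ∨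
    (∃ N₁ N₂ : Set V, N₁.Nonempty ∧ N₂.Nonempty ∧
      N₁ ∪ N₂ = Set.univ ∧ Disjoint N₁ N₂ ∧
      ∀ x ∈ N₁, ∀ y ∈ N₂, Γ x y) := by
  classical
  have hne : Nonempty V := Fintype.card_pos_iff.mp (by omega)
  set sym : V → V → Prop := fun x y => Γ x y ∨ Γ y x with hsymdef
  by_cases hconn : ∀ a b : V, Relation.ReflTransGen sym a b
  · -- connected case: series decomposition
    right
    have wf : WellFounded Γ := by
      haveI : IsTrans V Γ := ⟨htr⟩
      haveI : IsIrrefl V Γ := ⟨hirr⟩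
      exact Finite.wellFounded_of_trans_of_irrefl Γ
    -- every element has a minimal element weakly below it
    have below_min : ∀ x : V, ∃ m, (∀ z, ¬ Γ z m) ∧ (m = x ∨ Γ m x) := by
      intro x
      obtain ⟨m, hm, hmin⟩ := wf.has_min {y | y = x ∨ Γ y x} ⟨x, Or.inl rfl⟩
      refine ⟨m, fun z hz => ?_, hm⟩
      exact hmin z (hm.elim (fun h => Or.inr (h ▸ hz))
        (fun h => Or.inr (htr _ _ _ hz h))) hz
    -- every minimal element has something above it
    have hup : ∀ m : V, (∀ z, ¬ Γ z m) → ∃ u, Γ m u := by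
      intro m hm
      obtain ⟨b, hb⟩ : ∃ b : V, b ≠ m := Fintype.exists_ne_of_one_lt_card (by omega) m
      rcases (hconn m b).cases_head with h | ⟨c, hc, _⟩
      · exact absurd h.symm hb
      · rcases hc with h | h
        · exact ⟨c, h⟩
        · exact absurd h (hm c)
    -- transitivity of "having a common upper bound" on minimal elements
    have Rtrans : ∀ m1, (∀ z, ¬ Γ z m1) → ∀ m2, (∀ z, ¬ Γ z m2) → ∀ m3, (∀ z, ¬ Γ z m3) →
        (∃ u, Γ m1 u ∧ Γ m2 u) → (∃ u, Γ m2 u ∧ Γ m3 u) → ∃ u, Γ m1 u ∧ Γ m3 u := by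
      rintro m1 h1 m2 h2 m3 h3 ⟨u, hu1, hu2⟩ ⟨v, hv2, hv3⟩
      by_cases huv : u = v
      · exact ⟨u, hu1, huv ▸ hv3⟩
      by_cases h12 : m1 = m2
      · exact ⟨v, h12 ▸ hv2, hv3⟩
      by_cases h13 : m1 = m3
      · exact ⟨u, hu1, h13 ▸ hu1⟩
      have h1u : m1 ≠ u := fun h => hirr m1 (h ▸ hu1)
      have h1v : m1 ≠ v := fun h => h1 m3 (h ▸ hv3)
      have hu2' : u ≠ m2 := fun h => h2 m1 (h ▸ hu1)
      have h2v : m2 ≠ v := fun h => hirr m2 (h ▸ hv2)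
      rcases henv m1 u m2 v h1u h12 h1v hu2' huv h2v hu1 hv2 hu2 with h | h | h
      · exact absurd h (h1 m2)
      · exact ⟨v, h, hv3⟩
      · exact ⟨u, hu1, htr _ _ _ hv3 h⟩
    -- along any path from a minimal element, minimal elements below share upper bounds
    have key : ∀ m, (∀ z, ¬ Γ z m) → ∀ x : V,
        ∃ mx, (∀ z, ¬ Γ z mx) ∧ (mx = x ∨ Γ mx x) ∧ ∃ u, Γ m u ∧ Γ mx u := by
      intro m hm x
      have hpath := hconn m x
      induction hpath with
      | refl =>
        obtain ⟨u, hu⟩ := hup m hm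
        exact ⟨m, hm, Or.inl rfl, u, hu, hu⟩
      | @tail b c hab hbc ih =>
        obtain ⟨mb, hmb, hmbb, u, hmu, hmbu⟩ := ih
        rcases hbc with hbc | hcb
        · refine ⟨mb, hmb, Or.inr ?_, u, hmu, hmbu⟩
          rcases hmbb with rfl | h
          · exact hbc
          · exact htr _ _ _ h hbc
        · obtain ⟨mc, hmc, hmcc⟩ := below_min c
          have hmcb : Γ mc b := by
            rcases hmcc with rfl | h
            · exact hcb
            · exact htr _ _ _ h hcb
          rcases hmbb with rfl | hmbB
          · exact absurd hmcb (hmb mc)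
          · exact ⟨mc, hmc, hmcc,
              Rtrans m hm mb hmb mc hmc ⟨u, hmu, hmbu⟩ ⟨b, hmbB, hmcb⟩⟩
    -- any two minimal elements have a common upper bound
    have pairR : ∀ m, (∀ z, ¬ Γ z m) → ∀ m', (∀ z, ¬ Γ z m') →
        ∃ u, Γ m u ∧ Γ m' u := by
      intro m hm m' hm'
      obtain ⟨mx, hmx, hmxx, u, hu1, hu2⟩ := key m hm m'
      rcases hmxx with rfl | h
      · exact ⟨u, hu1, hu2⟩
      · exact absurd h (hm' mx)
    -- all minimal elements have a common upper bound
    have hfs : ∀ s : Finset V, (∀ m ∈ s, ∀ z, ¬ Γ z m) → ∃ u, ∀ m ∈ s, Γ m u := by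
      obtain ⟨x0⟩ := hne
      obtain ⟨m0, hm0, _⟩ := below_min x0
      intro s
      induction s using Finset.cons_induction with
      | empty =>
        intro _
        obtain ⟨u, hu⟩ := hup m0 hm0
        exact ⟨u, by simp⟩
      | cons m' s hms ih =>
        intro hsub
        have hm' : ∀ z, ¬ Γ z m' := hsub m' (Finset.mem_cons_self _ _)
        obtain ⟨u, hu⟩ := ih (fun x hx => hsub x (Finset.mem_cons_of_mem hx))
        rcases s.eq_empty_or_nonempty with rfl | ⟨m1, hm1⟩
        · obtain ⟨v, hv⟩ := hup m' hm'
          exact ⟨v, by simp [hv]⟩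
        · have hm1M : ∀ z, ¬ Γ z m1 := hsub m1 (Finset.mem_cons_of_mem hm1)
          obtain ⟨v, hv1, hv'⟩ := pairR m1 hm1M m' hm'
          by_cases huv : u = v
          · refine ⟨u, fun m hm => ?_⟩
            rcases Finset.mem_cons.mp hm with rfl | hm
            · exact huv ▸ hv'
            · exact hu m hm
          have hne1 : m' ≠ v := fun h => hirr m' (h ▸ hv')
          have hne2 : m' ≠ m1 := fun h => hms (h ▸ hm1)
          have hne3 : m' ≠ u := fun h => hm' m1 (h ▸ hu m1 hm1)
          have hne4 : v ≠ m1 := fun h => hirr m1 (h ▸ hv1)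
          have hne5 : m1 ≠ u := fun h => hirr m1 (h ▸ hu m1 hm1)
          rcases henv m' v m1 u hne1 hne2 hne3 hne4 (fun h => huv h.symm) hne5
            hv' (hu m1 hm1) hv1 with h | h | h
          · exact absurd h (hm' m1)
          · refine ⟨u, fun m hm => ?_⟩
            rcases Finset.mem_cons.mp hm with rfl | hm
            · exact h
            · exact hu m hm
          · refine ⟨v, fun m hm => ?_⟩
            rcases Finset.mem_cons.mp hm with rfl | hm
            · exact hv'
            · exact htr _ _ _ (hu m hm) h
    obtain ⟨u0, hu0⟩ := hfs (Finset.univ.filter (fun m => ∀ z, ¬ Γ z m))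
      (fun m hm => (Finset.mem_filter.mp hm).2)
    have hu0' : ∀ m, (∀ z, ¬ Γ z m) → Γ m u0 := fun m hm =>
      hu0 m (Finset.mem_filter.mpr ⟨Finset.mem_univ m, hm⟩)
    obtain ⟨x0⟩ := hne
    obtain ⟨m0, hm0, _⟩ := below_min x0
    set N₂ : Set V := {u | ∀ m, (∀ z, ¬ Γ z m) → Γ m u} with hN2
    have hm0notin : m0 ∉ N₂ := fun h => hirr m0 (h m0 hm0)
    refine ⟨N₂ᶜ, N₂, ⟨m0, hm0notin⟩, ⟨u0, fun m hm => hu0' m hm⟩,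
      Set.compl_union_self _, disjoint_compl_left, ?_⟩
    intro x hx u hu
    by_cases hxmin : ∀ z, ¬ Γ z x
    · exact hu x hxmin
    · obtain ⟨m', hm'M, hm'x⟩ := below_min x
      have hm'x : Γ m' x := by
        rcases hm'x with rfl | h
        · exact absurd hm'M hxmin
        · exact h
      have hx' : ¬ ∀ m, (∀ z, ¬ Γ z m) → Γ m x := hx
      push_neg at hx'
      obtain ⟨m, hmM, hmx⟩ := hx'
      have d1 : m ≠ u := fun h => hirr m (h ▸ hu m hmM)
      have d2 : m ≠ m' := fun h => hmx (h ▸ hm'x)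
      have d3 : m ≠ x := fun h => hxmin (h ▸ hmM)
      have d4 : u ≠ m' := fun h => hirr m' (h ▸ hu m' hm'M)
      have d5 : u ≠ x := fun h => hx (h ▸ hu)
      have d6 : m' ≠ x := fun h => hirr m' (h ▸ hm'x)
      rcases henv m u m' x d1 d2 d3 d4 d5 d6
        (hu m hmM) hm'x (hu m' hm'M) with h | h | h
      · exact absurd h (hmM m')
      · exact absurd h hmx
      · exact h
  · -- disconnected case
    left
    push_neg at hconn
    obtain ⟨a, b, hab⟩ := hconn
    refine ⟨{x | Relation.ReflTransGen sym a x}, {x | Relation.ReflTransGen sym a x}ᶜ,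
      ⟨a, Relation.ReflTransGen.refl⟩, ⟨b, hab⟩, by simp, disjoint_compl_right, ?_⟩
    intro x hx y hy
    exact ⟨fun h => hy (hx.tail (Or.inl h)), fun h => hy (hx.tail (Or.inr h))⟩
end

section
/- In a finite strict partial order Γ on a node set with at least two elements in which every pair of distinct nodes forms a fork (is comparable or has a common child or a common parent), let Top be the nonempty set of nodes with no incoming edges, and suppose Top has at least two elements. Then there exists a node Z that is a child of every node in Top; moreover, letting M be the set of nodes dominated by every node in Top, if additionally Γ satisfies the Envelope property then every node not in M has an edge to every node of M. -/
/-- in a finite SPO in which every pair of distinct nodes forms a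
fork, if the set `Top` of nodes with no incoming edges has at least two
elements, then some node `Z` is a child of every node of `Top`; moreover, if the
graph also satisfies Envelope then, with `M` the set of nodes dominated by
every node of `Top`, every node outside `M` has an edge to every node of `M`. -/
theorem top_common_child_and_edge_partition {V : Type*} [Fintype V]
    (Γ : V → V → Prop)
    (hcard : 2 ≤ Fintype.card V)
    (hirr : ∀ a, ¬ Γ a a)
    (htr : ∀ a b c, Γ a b → Γ b c → Γ a c)
    (hfork : ∀ A B : V, A ≠ B →
      (Γ A B ∨ Γ B A ∨
        ∃ C : V, C ≠ A ∧ C ≠ B ∧ ((Γ A C ∧ Γ B C) ∨ (Γ C A ∧ Γ C B))))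
    (htop : ∃ t₁ t₂ : V, t₁ ≠ t₂ ∧ (∀ y, ¬ Γ y t₁) ∧ (∀ y, ¬ Γ y t₂)) :
    (∃ Z : V, ∀ t : V, (∀ y, ¬ Γ y t) → Γ t Z) ∧
    ((∀ a b c d : V, a ≠ b → a ≠ c → a ≠ d → b ≠ c → b ≠ d → c ≠ d →
        Γ a b → Γ c d → Γ c b → (Γ c a ∨ Γ a d ∨ Γ d b)) →
      ∀ x : V, x ∉ {z : V | ∀ t : V, (∀ y, ¬ Γ y t) → Γ t z} →
        ∀ z ∈ {z : V | ∀ t : V, (∀ y, ¬ Γ y t) → Γ t z}, Γ x z) := by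
  obtain ⟨t₁, t₂, hne, ht₁, ht₂⟩ := htop
  haveI : IsTrans V (flip Γ) := ⟨fun a b c h₁ h₂ => htr c b a h₂ h₁⟩
  haveI : IsIrrefl V (flip Γ) := ⟨hirr⟩
  haveI : IsTrans V Γ := ⟨htr⟩
  haveI : IsIrrefl V Γ := ⟨hirr⟩
  have wfF : WellFounded (flip Γ) := Finite.wellFounded_of_trans_of_irrefl _
  have wf : WellFounded Γ := Finite.wellFounded_of_trans_of_irrefl _
  -- the set of common descendants of t₁ and t₂ is nonempty
  have hSne : (({z : V | Γ t₁ z ∧ Γ t₂ z}) : Set V).Nonempty := by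
    rcases hfork t₁ t₂ hne with h | h | ⟨C, _, _, ⟨h1, h2⟩ | ⟨h1, h2⟩⟩
    · exact absurd h (ht₂ t₁)
    · exact absurd h (ht₁ t₂)
    · exact ⟨C, h1, h2⟩
    · exact absurd h1 (ht₁ C)
  obtain ⟨Z, ⟨hZ1, hZ2⟩, hZmin⟩ := wfF.has_min _ hSne
  have hZtop : ∀ t : V, (∀ y, ¬ Γ y t) → Γ t Z := by
    intro t ht
    by_contra htZ
    have htZne : t ≠ Z := by rintro rfl; exact ht t₁ hZ1
    rcases hfork t Z htZne with h | h | ⟨C, _, _, ⟨h1, h2⟩ | ⟨h1, h2⟩⟩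
    · exact htZ h
    · exact ht Z h
    · exact hZmin C ⟨htr t₁ Z C hZ1 h2, htr t₂ Z C hZ2 h2⟩ h2
    · exact ht C h1
  refine ⟨⟨Z, hZtop⟩, ?_⟩
  intro henv x hx z hz
  simp only [Set.mem_setOf_eq] at hx hz
  -- if x is a top, done
  by_cases hxtop : ∀ y, ¬ Γ y x
  · exact hz x hxtop
  -- otherwise x has a top ancestor t'
  push_neg at hxtop
  have hAne : (({y : V | Γ y x}) : Set V).Nonempty := hxtop
  obtain ⟨t', ht'x, ht'min⟩ := wf.has_min _ hAne
  have ht'top : ∀ y, ¬ Γ y t' := by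
    intro y hy
    exact ht'min y (htr y t' x hy ht'x) hy
  -- some top t does not dominate x
  push_neg at hx
  obtain ⟨t, httop, htx⟩ := hx
  have htz : Γ t z := hz t httop
  have ht'z : Γ t' z := hz t' ht'top
  -- distinctness
  have h1 : t ≠ z := fun h => hirr z (h ▸ htz)
  have h2 : t ≠ t' := fun h => htx (h ▸ ht'x)
  have h3 : t ≠ x := by
    rintro rfl; exact httop t' ht'x
  have h4 : z ≠ t' := fun h => hirr t' (h ▸ ht'z)
  have h5 : z ≠ x := by
    rintro rfl; exact htx htz
  have h6 : t' ≠ x := fun h => hirr x (h ▸ ht'x)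
  rcases henv t z t' x h1 h2 h3 h4 h5 h6 htz ht'x ht'z with h | h | h
  · exact absurd h (httop t')
  · exact absurd h htx
  · exact h
end

section
/- Two full p-skyline relations over the same attribute set and attribute preferences are equal as binary relations on the tuple universe if and only if their p-graphs have identical edge sets. -/
namespace PExprAux

open PExpr

lemma edges_subset {ι : Type*} (e : PExpr ι) : e.edges ⊆ e.vars ×ˢ e.vars := by
  induction e with
  | atom i => simp [edges]
  | prio f g ihf ihg =>
    rintro ⟨a, b⟩ hp
    simp only [edges, vars, Set.mem_union, Set.mem_prod] at hp ⊢
    rcases hp with (hp | hp) | hp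
    · exact ⟨Or.inl (ihf hp).1, Or.inl (ihf hp).2⟩
    · exact ⟨Or.inr (ihg hp).1, Or.inr (ihg hp).2⟩
    · exact ⟨Or.inl hp.1, Or.inr hp.2⟩
  | pareto f g ihf ihg =>
    rintro ⟨a, b⟩ hp
    simp only [edges, vars, Set.mem_union, Set.mem_prod] at hp ⊢
    rcases hp with hp | hp
    · exact ⟨Or.inl (ihf hp).1, Or.inl (ihf hp).2⟩
    · exact ⟨Or.inr (ihg hp).1, Or.inr (ihg hp).2⟩

/-- The first-order characterization of a p-skyline relation in terms of
the p-graph: `o` is preferred to `o'` iff `o` is strictly better in some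
relevant attribute, and every attribute where `o` is worse is dominated by
a more important attribute where `o` is better. -/
def P {ι : Type*} {D : ι → Type*} [∀ i, LinearOrder (D i)]
    (e : PExpr ι) (o o' : ∀ i, D i) : Prop :=
  (∃ a ∈ e.vars, o' a < o a) ∧
  ∀ a ∈ e.vars, o a < o' a → ∃ b ∈ e.vars, (b, a) ∈ e.edges ∧ o' b < o b

lemma rel_iff_P {ι : Type*} {D : ι → Type*} [∀ i, LinearOrder (D i)]
    {e : PExpr ι} (hw : e.wf) (o o' : ∀ i, D i) :
    e.rel o o' ↔ P e o o' := by
  induction e with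
  | atom i =>
    simp only [rel, P, vars, edges, Set.mem_singleton_iff]
    constructor
    · intro h
      refine ⟨⟨i, rfl, h⟩, ?_⟩
      rintro a rfl ha
      exact absurd h (lt_asymm ha)
    · rintro ⟨⟨a, rfl, ha⟩, _⟩
      exact ha
  | prio f g ihf ihg =>
    obtain ⟨hwf, hwg, hd⟩ := hw
    rw [show (f.prio g).rel o o' = (f.rel o o' ∨ ((∀ i ∈ f.vars, o i = o' i) ∧ g.rel o o')) from rfl,
      ihf hwf, ihg hwg]
    constructor
    · rintro (⟨⟨a, ha, hlt⟩, hcov⟩ | ⟨heq, ⟨a, ha, hlt⟩, hcov⟩)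
      · refine ⟨⟨a, Or.inl ha, hlt⟩, ?_⟩
        rintro c (hc | hc) hworse
        · obtain ⟨b, hb, hedge, hblt⟩ := hcov c hc hworse
          exact ⟨b, Or.inl hb, Or.inl (Or.inl hedge), hblt⟩
        · exact ⟨a, Or.inl ha, Or.inr ⟨ha, hc⟩, hlt⟩
      · refine ⟨⟨a, Or.inr ha, hlt⟩, ?_⟩
        rintro c (hc | hc) hworse
        · exact absurd (heq c hc) (ne_of_lt hworse)
        · obtain ⟨b, hb, hedge, hblt⟩ := hcov c hc hworse
          exact ⟨b, Or.inr hb, Or.inl (Or.inr hedge), hblt⟩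
    · rintro ⟨⟨a, ha, hlt⟩, hcov⟩
      -- helper: an edge whose target is in f.vars must come from f.edges,
      -- with source in f.vars
      have key : ∀ b c, c ∈ f.vars → (b, c) ∈ (f.prio g).edges →
          b ∈ f.vars ∧ (b, c) ∈ f.edges := by
        intro b c hc hedge
        rcases hedge with (he | he) | he
        · exact ⟨(edges_subset f he).1, he⟩
        · exact absurd hc (Set.disjoint_right.mp hd (edges_subset g he).2)
        · exact absurd hc (Set.disjoint_right.mp hd he.2)
      by_cases hb : ∃ c ∈ f.vars, o' c < o c
      · left
        refine ⟨hb, ?_⟩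
        intro c hc hworse
        obtain ⟨b, hbmem, hedge, hblt⟩ := hcov c (Or.inl hc) hworse
        obtain ⟨hbv, hbe⟩ := key b c hc hedge
        exact ⟨b, hbv, hbe, hblt⟩
      · right
        have heq : ∀ c ∈ f.vars, o c = o' c := by
          intro c hc
          rcases lt_trichotomy (o c) (o' c) with hlt' | heq' | hgt'
          · obtain ⟨b, hbmem, hedge, hblt⟩ := hcov c (Or.inl hc) hlt'
            obtain ⟨hbv, _⟩ := key b c hc hedge
            exact absurd ⟨b, hbv, hblt⟩ hb
          · exact heq'
          · exact absurd ⟨c, hc, hgt'⟩ hb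
        have hag : a ∈ g.vars := by
          rcases ha with ha | ha
          · exact absurd ⟨a, ha, hlt⟩ hb
          · exact ha
        refine ⟨heq, ⟨a, hag, hlt⟩, ?_⟩
        intro c hc hworse
        obtain ⟨b, hbmem, hedge, hblt⟩ := hcov c (Or.inr hc) hworse
        rcases hedge with (he | he) | he
        · exact absurd hc (Set.disjoint_left.mp hd (edges_subset f he).2)
        · exact ⟨b, (edges_subset g he).1, he, hblt⟩
        · exact absurd ⟨b, he.1, hblt⟩ hb
  | pareto f g ihf ihg =>
    obtain ⟨hwf, hwg, hd⟩ := hw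
    rw [show (f.pareto g).rel o o' =
        ((f.rel o o' ∧ ∀ i ∈ g.vars, o i = o' i) ∨
         (g.rel o o' ∧ ∀ i ∈ f.vars, o i = o' i) ∨
         (f.rel o o' ∧ g.rel o o')) from rfl,
      ihf hwf, ihg hwg]
    constructor
    · rintro (⟨⟨⟨a, ha, hlt⟩, hcov⟩, heq⟩ | ⟨⟨⟨a, ha, hlt⟩, hcov⟩, heq⟩ |
        ⟨⟨⟨a, ha, hlt⟩, hcovf⟩, ⟨_, hcovg⟩⟩)
      · refine ⟨⟨a, Or.inl ha, hlt⟩, ?_⟩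
        rintro c (hc | hc) hworse
        · obtain ⟨b, hbv, hbe, hblt⟩ := hcov c hc hworse
          exact ⟨b, Or.inl hbv, Or.inl hbe, hblt⟩
        · exact absurd (heq c hc) (ne_of_lt hworse)
      · refine ⟨⟨a, Or.inr ha, hlt⟩, ?_⟩
        rintro c (hc | hc) hworse
        · exact absurd (heq c hc) (ne_of_lt hworse)
        · obtain ⟨b, hbv, hbe, hblt⟩ := hcov c hc hworse
          exact ⟨b, Or.inr hbv, Or.inr hbe, hblt⟩
      · refine ⟨⟨a, Or.inl ha, hlt⟩, ?_⟩
        rintro c (hc | hc) hworse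
        · obtain ⟨b, hbv, hbe, hblt⟩ := hcovf c hc hworse
          exact ⟨b, Or.inl hbv, Or.inl hbe, hblt⟩
        · obtain ⟨b, hbv, hbe, hblt⟩ := hcovg c hc hworse
          exact ⟨b, Or.inr hbv, Or.inr hbe, hblt⟩
    · rintro ⟨⟨a, ha, hlt⟩, hcov⟩
      have keyf : ∀ b c, c ∈ f.vars → (b, c) ∈ (f.pareto g).edges →
          b ∈ f.vars ∧ (b, c) ∈ f.edges := by
        intro b c hc hedge
        rcases hedge with he | he
        · exact ⟨(edges_subset f he).1, he⟩
        · exact absurd hc (Set.disjoint_right.mp hd (edges_subset g he).2)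
      have keyg : ∀ b c, c ∈ g.vars → (b, c) ∈ (f.pareto g).edges →
          b ∈ g.vars ∧ (b, c) ∈ g.edges := by
        intro b c hc hedge
        rcases hedge with he | he
        · exact absurd hc (Set.disjoint_right.mp hd.symm (edges_subset f he).2)
        · exact ⟨(edges_subset g he).1, he⟩
      have sidef : (∀ c ∈ f.vars, o c = o' c) ∨ P f o o' := by
        by_cases hbf : ∃ c ∈ f.vars, o' c < o c
        · right
          refine ⟨hbf, ?_⟩
          intro c hc hworse
          obtain ⟨b, _, hedge, hblt⟩ := hcov c (Or.inl hc) hworse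
          obtain ⟨hbv, hbe⟩ := keyf b c hc hedge
          exact ⟨b, hbv, hbe, hblt⟩
        · left
          intro c hc
          rcases lt_trichotomy (o c) (o' c) with hlt' | heq' | hgt'
          · obtain ⟨b, _, hedge, hblt⟩ := hcov c (Or.inl hc) hlt'
            obtain ⟨hbv, _⟩ := keyf b c hc hedge
            exact absurd ⟨b, hbv, hblt⟩ hbf
          · exact heq'
          · exact absurd ⟨c, hc, hgt'⟩ hbf
      have sideg : (∀ c ∈ g.vars, o c = o' c) ∨ P g o o' := by
        by_cases hbg : ∃ c ∈ g.vars, o' c < o c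
        · right
          refine ⟨hbg, ?_⟩
          intro c hc hworse
          obtain ⟨b, _, hedge, hblt⟩ := hcov c (Or.inr hc) hworse
          obtain ⟨hbv, hbe⟩ := keyg b c hc hedge
          exact ⟨b, hbv, hbe, hblt⟩
        · left
          intro c hc
          rcases lt_trichotomy (o c) (o' c) with hlt' | heq' | hgt'
          · obtain ⟨b, _, hedge, hblt⟩ := hcov c (Or.inr hc) hlt'
            obtain ⟨hbv, _⟩ := keyg b c hc hedge
            exact absurd ⟨b, hbv, hblt⟩ hbg
          · exact heq'
          · exact absurd ⟨c, hc, hgt'⟩ hbg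
      rcases sidef with heqf | hPf
      · rcases sideg with heqg | hPg
        · -- impossible: the witness a is in one of the sides
          rcases ha with ha | ha
          · exact absurd (heqf a ha) (ne_of_gt hlt)
          · exact absurd (heqg a ha) (ne_of_gt hlt)
        · exact Or.inr (Or.inl ⟨hPg, heqf⟩)
      · rcases sideg with heqg | hPg
        · exact Or.inl ⟨hPf, heqg⟩
        · exact Or.inr (Or.inr ⟨hPf, hPg⟩)

/-- If the two relations agree, the edges of `e₁` are contained in those of `e₂`. -/
lemma edges_mono {ι : Type*}
    {D : ι → Type*} [∀ i, LinearOrder (D i)] [∀ i, Infinite (D i)]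
    {e₁ e₂ : PExpr ι} (h₁ : e₁.wf) (h₂ : e₂.wf)
    (hv₁ : e₁.vars = Set.univ) (hv₂ : e₂.vars = Set.univ)
    (hrel : ∀ o o' : ∀ i, D i, e₁.rel o o' → e₂.rel o o') :
    e₁.edges ⊆ e₂.edges := by
  classical
  rintro ⟨b, a⟩ hedge
  have hba : b ≠ a := by
    clear hrel hv₁ hv₂ h₂
    induction e₁ with
    | atom i => exact absurd hedge (Set.notMem_empty _)
    | prio f g ihf ihg =>
      obtain ⟨hwf, hwg, hd⟩ := h₁
      rcases hedge with (he | he) | he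
      · exact ihf hwf he
      · exact ihg hwg he
      · rintro rfl
        exact Set.disjoint_left.mp hd he.1 he.2
    | pareto f g ihf ihg =>
      obtain ⟨hwf, hwg, hd⟩ := h₁
      rcases hedge with he | he
      · exact ihf hwf he
      · exact ihg hwg he
  -- pick two distinct values in each domain
  have hpair : ∀ i, ∃ u v : D i, u < v := fun i => exists_pair_lt (D i)
  choose u v huv using hpair
  set o : ∀ i, D i := fun i => if i = a then u i else v i with ho
  set o' : ∀ i, D i := fun i => if i = b then u i else v i with ho'
  have hob : o b = v b := by simp [ho, hba]
  have ho'b : o' b = u b := by simp [ho']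
  have hoa : o a = u a := by simp [ho]
  have ho'a : o' a = v a := by simp [ho', hba.symm]
  have hothr : ∀ i, i ≠ a → i ≠ b → o i = o' i := by
    intro i hia hib; simp [ho, ho', hia, hib]
  have hP₁ : P e₁ o o' := by
    refine ⟨⟨b, by rw [hv₁]; trivial, by rw [hob, ho'b]; exact huv b⟩, ?_⟩
    intro c _ hworse
    by_cases hca : c = a
    · subst hca
      exact ⟨b, by rw [hv₁]; trivial, hedge, by rw [hob, ho'b]; exact huv b⟩
    · by_cases hcb : c = b
      · subst hcb
        rw [hob, ho'b] at hworse
        exact absurd (huv c) (lt_asymm hworse)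
      · rw [hothr c hca hcb] at hworse
        exact absurd hworse (lt_irrefl _)
  have hP₂ : P e₂ o o' := (rel_iff_P h₂ o o').mp (hrel o o' ((rel_iff_P h₁ o o').mpr hP₁))
  obtain ⟨b', _, hbe', hblt'⟩ := hP₂.2 a (by rw [hv₂]; trivial)
    (by rw [hoa, ho'a]; exact huv a)
  have hb' : b' = b := by
    by_contra hne
    by_cases hba' : b' = a
    · subst hba'
      rw [hoa, ho'a] at hblt'
      exact absurd (huv b') (lt_asymm hblt')
    · rw [hothr b' hba' hne] at hblt'
      exact absurd hblt' (lt_irrefl _)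
  rw [hb'] at hbe'
  exact hbe'

end PExprAux

/-- two full p-skyline relations over the same attributes are
equal as binary relations on the tuple universe iff their p-graphs have
identical edge sets. -/
theorem pskyline_eq_iff_pgraph_eq {ι : Type*} [Fintype ι]
    {D : ι → Type*} [∀ i, LinearOrder (D i)] [∀ i, Infinite (D i)]
    (e₁ e₂ : PExpr ι) (h₁ : e₁.wf) (h₂ : e₂.wf)
    (hv₁ : e₁.vars = Set.univ) (hv₂ : e₂.vars = Set.univ) :
    (∀ o o' : ∀ i, D i, e₁.rel o o' ↔ e₂.rel o o') ↔ e₁.edges = e₂.edges := by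
  constructor
  · intro h
    exact Set.Subset.antisymm
      (PExprAux.edges_mono h₁ h₂ hv₁ hv₂ fun o o' => (h o o').mp)
      (PExprAux.edges_mono h₂ h₁ hv₂ hv₁ fun o o' => (h o o').mpr)
  · intro h o o'
    rw [PExprAux.rel_iff_P h₁, PExprAux.rel_iff_P h₂]
    unfold PExprAux.P
    rw [hv₁, hv₂, h]
end

section
/- For full p-skyline relations ≻₁, ≻₂ over the same attribute set: ≻₁ is a strict subset of ≻₂ (as binary relations on the tuple universe) if and only if the edge set of the p-graph of ≻₁ is a strict subset of the edge set of the p-graph of ≻₂. -/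
namespace PExpr

lemma edges_sub_s11 {ι : Type*} (e : PExpr ι) :
    ∀ p ∈ e.edges, p.1 ∈ e.vars ∧ p.2 ∈ e.vars := by
  induction e with
  | atom i => simp [edges]
  | prio e₁ e₂ ih₁ ih₂ =>
    rintro ⟨a, b⟩ ((h | h) | h)
    · exact ⟨Or.inl (ih₁ _ h).1, Or.inl (ih₁ _ h).2⟩
    · exact ⟨Or.inr (ih₂ _ h).1, Or.inr (ih₂ _ h).2⟩
    · exact ⟨Or.inl h.1, Or.inr h.2⟩
  | pareto e₁ e₂ ih₁ ih₂ =>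
    rintro ⟨a, b⟩ (h | h)
    · exact ⟨Or.inl (ih₁ _ h).1, Or.inl (ih₁ _ h).2⟩
    · exact ⟨Or.inr (ih₂ _ h).1, Or.inr (ih₂ _ h).2⟩

lemma rel_iff {ι : Type*} {D : ι → Type*} [∀ i, LinearOrder (D i)] (e : PExpr ι)
    (he : e.wf) (o o' : ∀ i, D i) :
    e.rel o o' ↔ ((∃ i ∈ e.vars, o' i < o i) ∧
      ∀ j ∈ e.vars, o j < o' j → ∃ i, o' i < o i ∧ (i, j) ∈ e.edges) := by
  induction e with
  | atom i =>
    simp only [rel, vars, edges, Set.mem_singleton_iff]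
    constructor
    · intro h
      exact ⟨⟨i, rfl, h⟩, fun j hj hlt => absurd hlt (by subst hj; exact asymm h)⟩
    · rintro ⟨⟨i', rfl, h⟩, -⟩; exact h
  | prio e₁ e₂ ih₁ ih₂ =>
    obtain ⟨hw₁, hw₂, hd⟩ := he
    rw [rel, ih₁ hw₁, ih₂ hw₂]
    constructor
    · rintro (⟨⟨i, hi, hwin⟩, hcov⟩ | ⟨hag, ⟨i, hi, hwin⟩, hcov⟩)
      · refine ⟨⟨i, Or.inl hi, hwin⟩, ?_⟩
        rintro j (hj | hj) hlt
        · obtain ⟨k, hk, hke⟩ := hcov j hj hlt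
          exact ⟨k, hk, Or.inl (Or.inl hke)⟩
        · exact ⟨i, hwin, Or.inr ⟨hi, hj⟩⟩
      · refine ⟨⟨i, Or.inr hi, hwin⟩, ?_⟩
        rintro j (hj | hj) hlt
        · exact absurd (hag j hj) (ne_of_lt hlt)
        · obtain ⟨k, hk, hke⟩ := hcov j hj hlt
          exact ⟨k, hk, Or.inl (Or.inr hke)⟩
    · rintro ⟨⟨i, hi, hwin⟩, hcov⟩
      by_cases hW : ∃ i ∈ e₁.vars, o' i < o i
      · left
        refine ⟨hW, fun j hj hlt => ?_⟩
        obtain ⟨k, hk, (hke | hke) | hke⟩ := hcov j (Or.inl hj) hlt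
        · exact ⟨k, hk, hke⟩
        · exact absurd hj (fun h => hd.ne_of_mem h (edges_sub_s11 e₂ _ hke).2 rfl)
        · exact absurd hj (fun h => hd.ne_of_mem h hke.2 rfl)
      · right
        have hag : ∀ j ∈ e₁.vars, o j = o' j := by
          intro j hj
          rcases lt_trichotomy (o j) (o' j) with hlt | heq | hgt
          · obtain ⟨k, hk, (hke | hke) | hke⟩ := hcov j (Or.inl hj) hlt
            · exact absurd ⟨k, (edges_sub_s11 e₁ _ hke).1, hk⟩ hW
            · exact absurd hj (fun h => hd.ne_of_mem h (edges_sub_s11 e₂ _ hke).2 rfl)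
            · exact absurd hj (fun h => hd.ne_of_mem h hke.2 rfl)
          · exact heq
          · exact absurd ⟨j, hj, hgt⟩ hW
        refine ⟨hag, ⟨i, ?_, hwin⟩, ?_⟩
        · rcases hi with hi | hi
          · exact absurd ⟨i, hi, hwin⟩ hW
          · exact hi
        · intro j hj hlt
          obtain ⟨k, hk, (hke | hke) | hke⟩ := hcov j (Or.inr hj) hlt
          · exact absurd (edges_sub_s11 e₁ _ hke).2 (fun h => hd.ne_of_mem h hj rfl)
          · exact ⟨k, hk, hke⟩
          · exact absurd ⟨k, hke.1, hk⟩ hW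
  | pareto e₁ e₂ ih₁ ih₂ =>
    obtain ⟨hw₁, hw₂, hd⟩ := he
    rw [rel, ih₁ hw₁, ih₂ hw₂]
    constructor
    · rintro (⟨⟨⟨i, hi, hwin⟩, hcov⟩, hag⟩ | ⟨⟨⟨i, hi, hwin⟩, hcov⟩, hag⟩ |
        ⟨⟨⟨i, hi, hwin⟩, hcov⟩, ⟨-, hcov'⟩⟩)
      · refine ⟨⟨i, Or.inl hi, hwin⟩, ?_⟩
        rintro j (hj | hj) hlt
        · obtain ⟨k, hk, hke⟩ := hcov j hj hlt
          exact ⟨k, hk, Or.inl hke⟩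
        · exact absurd (hag j hj) (ne_of_lt hlt)
      · refine ⟨⟨i, Or.inr hi, hwin⟩, ?_⟩
        rintro j (hj | hj) hlt
        · exact absurd (hag j hj) (ne_of_lt hlt)
        · obtain ⟨k, hk, hke⟩ := hcov j hj hlt
          exact ⟨k, hk, Or.inr hke⟩
      · refine ⟨⟨i, Or.inl hi, hwin⟩, ?_⟩
        rintro j (hj | hj) hlt
        · obtain ⟨k, hk, hke⟩ := hcov j hj hlt
          exact ⟨k, hk, Or.inl hke⟩
        · obtain ⟨k, hk, hke⟩ := hcov' j hj hlt
          exact ⟨k, hk, Or.inr hke⟩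
    · rintro ⟨⟨i, hi, hwin⟩, hcov⟩
      have cov₁ : ∀ j ∈ e₁.vars, o j < o' j → ∃ k, o' k < o k ∧ (k, j) ∈ e₁.edges := by
        intro j hj hlt
        obtain ⟨k, hk, hke | hke⟩ := hcov j (Or.inl hj) hlt
        · exact ⟨k, hk, hke⟩
        · exact absurd hj (fun h => hd.ne_of_mem h (edges_sub_s11 e₂ _ hke).2 rfl)
      have cov₂ : ∀ j ∈ e₂.vars, o j < o' j → ∃ k, o' k < o k ∧ (k, j) ∈ e₂.edges := by
        intro j hj hlt
        obtain ⟨k, hk, hke | hke⟩ := hcov j (Or.inr hj) hlt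
        · exact absurd (edges_sub_s11 e₁ _ hke).2 (fun h => hd.ne_of_mem h hj rfl)
        · exact ⟨k, hk, hke⟩
      by_cases hW₁ : ∃ i ∈ e₁.vars, o' i < o i
      · by_cases hW₂ : ∃ i ∈ e₂.vars, o' i < o i
        · exact Or.inr (Or.inr ⟨⟨hW₁, cov₁⟩, ⟨hW₂, cov₂⟩⟩)
        · refine Or.inl ⟨⟨hW₁, cov₁⟩, fun j hj => ?_⟩
          rcases lt_trichotomy (o j) (o' j) with hlt | heq | hgt
          · obtain ⟨k, hk, hke⟩ := cov₂ j hj hlt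
            exact absurd ⟨k, (edges_sub_s11 e₂ _ hke).1, hk⟩ hW₂
          · exact heq
          · exact absurd ⟨j, hj, hgt⟩ hW₂
      · by_cases hW₂ : ∃ i ∈ e₂.vars, o' i < o i
        · refine Or.inr (Or.inl ⟨⟨hW₂, cov₂⟩, fun j hj => ?_⟩)
          rcases lt_trichotomy (o j) (o' j) with hlt | heq | hgt
          · obtain ⟨k, hk, hke⟩ := cov₁ j hj hlt
            exact absurd ⟨k, (edges_sub_s11 e₁ _ hke).1, hk⟩ hW₁
          · exact heq
          · exact absurd ⟨j, hj, hgt⟩ hW₁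
        · rcases hi with hi | hi
          · exact absurd ⟨i, hi, hwin⟩ hW₁
          · exact absurd ⟨i, hi, hwin⟩ hW₂

lemma edges_ne {ι : Type*} (e : PExpr ι) (he : e.wf) : ∀ p ∈ e.edges, p.1 ≠ p.2 := by
  induction e with
  | atom i => simp [edges]
  | prio e₁ e₂ ih₁ ih₂ =>
    obtain ⟨hw₁, hw₂, hd⟩ := he
    rintro ⟨a, b⟩ ((h | h) | h)
    · exact ih₁ hw₁ _ h
    · exact ih₂ hw₂ _ h
    · exact hd.ne_of_mem h.1 h.2
  | pareto e₁ e₂ ih₁ ih₂ =>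
    obtain ⟨hw₁, hw₂, hd⟩ := he
    rintro ⟨a, b⟩ (h | h)
    · exact ih₁ hw₁ _ h
    · exact ih₂ hw₂ _ h

lemma rel_subset_iff {ι : Type*} {D : ι → Type*} [∀ i, LinearOrder (D i)]
    [∀ i, Infinite (D i)] (e₁ e₂ : PExpr ι) (h₁ : e₁.wf) (h₂ : e₂.wf)
    (hv₁ : e₁.vars = Set.univ) (hv₂ : e₂.vars = Set.univ) :
    (∀ o o' : ∀ i, D i, e₁.rel o o' → e₂.rel o o') ↔ e₁.edges ⊆ e₂.edges := by
  constructor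
  · intro hsub
    rintro ⟨a, b⟩ hab
    have hne : a ≠ b := edges_ne e₁ h₁ _ hab
    have hex : ∀ i, ∃ q : D i × D i, q.1 < q.2 := fun i => by
      obtain ⟨x, y, hxy⟩ := exists_pair_ne (D i)
      rcases hxy.lt_or_gt with h | h
      · exact ⟨(x, y), h⟩
      · exact ⟨(y, x), h⟩
    choose q hq using hex
    classical
    set o : ∀ i, D i := fun i => if i = b then (q i).1 else (q i).2 with ho
    set o' : ∀ i, D i := fun i => if i = a then (q i).1 else (q i).2 with ho'
    have hwin : ∀ i, o' i < o i ↔ i = a := by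
      intro i
      constructor
      · intro h
        by_contra hia
        simp only [ho, ho', if_neg hia] at h
        by_cases hib : i = b
        · simp only [if_pos hib] at h
          exact absurd h (asymm (hq i))
        · simp only [if_neg hib] at h
          exact absurd h (lt_irrefl _)
      · rintro rfl
        simp only [ho, ho', if_pos rfl, if_neg hne]
        exact hq _
    have hloss : ∀ i, o i < o' i ↔ i = b := by
      intro i
      constructor
      · intro h
        by_contra hib
        simp only [ho, ho', if_neg hib] at h
        by_cases hia : i = a
        · simp only [if_pos hia] at h
          exact absurd h (asymm (hq i))
        · simp only [if_neg hia] at h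
          exact absurd h (lt_irrefl _)
      · rintro rfl
        simp only [ho, ho', if_pos rfl, if_neg (Ne.symm hne)]
        exact hq _
    have hr₁ : e₁.rel o o' := by
      rw [rel_iff e₁ h₁, hv₁]
      refine ⟨⟨a, Set.mem_univ a, (hwin a).mpr rfl⟩, fun j _ hlt => ?_⟩
      rw [hloss] at hlt
      exact ⟨a, (hwin a).mpr rfl, hlt ▸ hab⟩
    have hr₂ := hsub o o' hr₁
    rw [rel_iff e₂ h₂, hv₂] at hr₂
    obtain ⟨k, hk, hke⟩ := hr₂.2 b (Set.mem_univ b) ((hloss b).mpr rfl)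
    rwa [(hwin k).mp hk] at hke
  · intro hE o o' h
    rw [rel_iff e₁ h₁, hv₁] at h
    rw [rel_iff e₂ h₂, hv₂]
    exact ⟨h.1, fun j hj hlt => by
      obtain ⟨k, hk, hke⟩ := h.2 j hj hlt
      exact ⟨k, hk, hE hke⟩⟩

end PExpr

/-- for full p-skyline relations, strict containment of the
relations coincides with strict containment of the p-graph edge sets. -/
theorem pskyline_ssubset_iff_pgraph_ssubset {ι : Type*} [Fintype ι]
    {D : ι → Type*} [∀ i, LinearOrder (D i)] [∀ i, Infinite (D i)]
    (e₁ e₂ : PExpr ι) (h₁ : e₁.wf) (h₂ : e₂.wf)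
    (hv₁ : e₁.vars = Set.univ) (hv₂ : e₂.vars = Set.univ) :
    ({p : (∀ i, D i) × (∀ i, D i) | e₁.rel p.1 p.2} ⊂
      {p : (∀ i, D i) × (∀ i, D i) | e₂.rel p.1 p.2}) ↔
    e₁.edges ⊂ e₂.edges := by
  have key : ∀ (f g : PExpr ι), f.wf → g.wf → f.vars = Set.univ → g.vars = Set.univ →
      (({p : (∀ i, D i) × (∀ i, D i) | f.rel p.1 p.2} ⊆
        {p : (∀ i, D i) × (∀ i, D i) | g.rel p.1 p.2}) ↔ f.edges ⊆ g.edges) := by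
    intro f g hf hg hvf hvg
    refine Iff.trans ?_ (PExpr.rel_subset_iff (D := D) f g hf hg hvf hvg)
    constructor
    · intro h o o' hr
      exact h (show (o, o') ∈ {p : (∀ i, D i) × (∀ i, D i) | f.rel p.1 p.2} from hr)
    · intro h p hp
      exact h p.1 p.2 hp
  rw [Set.ssubset_def, Set.ssubset_def, key e₁ e₂ h₁ h₂ hv₁ hv₂,
    key e₂ e₁ h₂ h₁ hv₂ hv₁]
end

section
/- Let ≻₁, ≻₂ be full p-skyline relations generated by children functions W¹, W². If W¹_A − W²_A ≠ ∅ for some attribute A, then there exist tuples o, o' with o ≻₁ o' and not o ≻₂ o'. -/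
/-- The relation generated by a children function `W`: the transitive closure of
the union over attributes `A` of
`q_A = { (o,o') : o.A >_A o'.A ∧ o,o' agree outside W A ∪ {A} }`. -/
def genRel {ι : Type*} {D : ι → Type*} [∀ i, LinearOrder (D i)]
    (W : ι → Set ι) : (∀ i, D i) → (∀ i, D i) → Prop :=
  Relation.TransGen
    (fun o o' => ∃ A : ι, o' A < o A ∧ ∀ B : ι, B ∉ W A → B ≠ A → o B = o' B)

section Aux

variable {ι : Type*} [Fintype ι] {D : ι → Type*} [∀ i, LinearOrder (D i)]

/-- Invariant: there is a nonempty set `S` of attributes where `o` beats `o'`,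
covering (via `W`) all attributes where the tuples differ. -/
def covQ (W : ι → Set ι) (o o' : ∀ i, D i) : Prop :=
  ∃ S : Set ι, S.Nonempty ∧ (∀ E ∈ S, o' E < o E) ∧
    ∀ C, o C ≠ o' C → ∃ E ∈ S, C = E ∨ C ∈ W E

theorem covQ_step (W : ι → Set ι) (o o' : ∀ i, D i)
    (h : ∃ A : ι, o' A < o A ∧ ∀ B : ι, B ∉ W A → B ≠ A → o B = o' B) :
    covQ (D := D) W o o' := by
  obtain ⟨A, hlt, hagree⟩ := h
  refine ⟨{A}, ⟨A, rfl⟩, ?_, ?_⟩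
  · rintro E hE
    rw [Set.mem_singleton_iff] at hE
    subst hE; exact hlt
  · intro C hC
    refine ⟨A, rfl, ?_⟩
    by_contra hcon
    push_neg at hcon
    exact hC (hagree C hcon.2 hcon.1)

theorem covQ_trans (W : ι → Set ι)
    (hirr : ∀ A, A ∉ W A)
    (htr : ∀ A B, B ∈ W A → ∀ C, C ∈ W B → C ∈ W A)
    {o o₁ o₂ : ∀ i, D i} (h1 : covQ (D := D) W o o₁) (h2 : covQ (D := D) W o₁ o₂) :
    covQ (D := D) W o o₂ := by
  obtain ⟨S₁, ⟨E₀, hE₀⟩, hw₁, hc₁⟩ := h1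
  obtain ⟨S₂, _, hw₂, hc₂⟩ := h2
  have hwf : WellFounded (fun x y : ι => y ∈ W x) := by
    haveI : IsTrans ι (fun x y : ι => y ∈ W x) :=
      ⟨fun a b c hab hbc => htr a b hab c hbc⟩
    haveI : IsIrrefl ι (fun x y : ι => y ∈ W x) := ⟨fun a => hirr a⟩
    exact Finite.wellFounded_of_trans_of_irrefl _
  set T : Set ι := S₁ ∪ S₂ with hT
  set S : Set ι := {F ∈ T | ∀ x ∈ T, F ∉ W x} with hS
  have key : ∀ E ∈ T, ∃ F ∈ S, (E = F ∨ E ∈ W F) := by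
    intro E hE
    obtain ⟨m, hmU, hmin⟩ :=
      hwf.has_min {F | F ∈ T ∧ (E = F ∨ E ∈ W F)} ⟨E, hE, Or.inl rfl⟩
    refine ⟨m, ⟨hmU.1, ?_⟩, hmU.2⟩
    intro x hx hmx
    refine hmin x ⟨hx, ?_⟩ hmx
    rcases hmU.2 with rfl | hEm
    · exact Or.inr hmx
    · exact Or.inr (htr x m hmx E hEm)
  -- every top element of S beats o₂
  have hwin : ∀ F ∈ S, o₂ F < o F := by
    rintro F ⟨hFT, hFmax⟩
    rcases hFT with hF1 | hF2
    · have h1 : o₁ F < o F := hw₁ F hF1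
      by_cases he : o₁ F = o₂ F
      · rw [← he]; exact h1
      · obtain ⟨G, hG, hFG⟩ := hc₂ F he
        rcases hFG with rfl | hmem
        · exact lt_trans (hw₂ F hG) h1
        · exact absurd hmem (hFmax G (Or.inr hG))
    · have h2 : o₂ F < o₁ F := hw₂ F hF2
      by_cases he : o F = o₁ F
      · rw [he]; exact h2
      · obtain ⟨G, hG, hFG⟩ := hc₁ F he
        rcases hFG with rfl | hmem
        · exact lt_trans h2 (hw₁ F hG)
        · exact absurd hmem (hFmax G (Or.inl hG))
  have hne : S.Nonempty := by
    obtain ⟨F, hF, _⟩ := key E₀ (Or.inl hE₀)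
    exact ⟨F, hF⟩
  refine ⟨S, hne, hwin, ?_⟩
  intro C hC
  have : o C ≠ o₁ C ∨ o₁ C ≠ o₂ C := by
    by_contra hcon
    push_neg at hcon
    exact hC (hcon.1.trans hcon.2)
  have hcov : ∃ E ∈ T, C = E ∨ C ∈ W E := by
    rcases this with h | h
    · obtain ⟨E, hE, hCE⟩ := hc₁ C h
      exact ⟨E, Or.inl hE, hCE⟩
    · obtain ⟨E, hE, hCE⟩ := hc₂ C h
      exact ⟨E, Or.inr hE, hCE⟩
  obtain ⟨E, hET, hCE⟩ := hcov
  obtain ⟨F, hFS, hEF⟩ := key E hET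
  refine ⟨F, hFS, ?_⟩
  rcases hCE with rfl | hCW
  · exact hEF
  · rcases hEF with rfl | hEW
    · exact Or.inr hCW
    · exact Or.inr (htr F E hEW C hCW)

theorem covQ_of_genRel (W : ι → Set ι)
    (hirr : ∀ A, A ∉ W A)
    (htr : ∀ A B, B ∈ W A → ∀ C, C ∈ W B → C ∈ W A)
    {o o' : ∀ i, D i} (h : genRel (D := D) W o o') : covQ (D := D) W o o' := by
  induction h with
  | single h => exact covQ_step W _ _ h
  | tail _ h ih => exact covQ_trans W hirr htr ih (covQ_step W _ _ h)

end Aux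

/-- if `W¹_A − W²_A ≠ ∅` for some attribute `A`, then the full
p-skyline relation generated by `W¹` is not contained in the one generated by
`W²`: there are tuples `o ≻₁ o'` with `¬ o ≻₂ o'`. -/
theorem gen_not_subset_of_children_diff {ι : Type*} [Fintype ι]
    {D : ι → Type*} [∀ i, LinearOrder (D i)] [∀ i, Nontrivial (D i)]
    (W₁ W₂ : ι → Set ι)
    (h₁irr : ∀ A, A ∉ W₁ A)
    (h₁tr : ∀ A B, B ∈ W₁ A → ∀ C, C ∈ W₁ B → C ∈ W₁ A)
    (h₁env : ∀ a b c d : ι, a ≠ b → a ≠ c → a ≠ d → b ≠ c → b ≠ d → c ≠ d →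
      b ∈ W₁ a → d ∈ W₁ c → b ∈ W₁ c → (a ∈ W₁ c ∨ d ∈ W₁ a ∨ b ∈ W₁ d))
    (h₂irr : ∀ A, A ∉ W₂ A)
    (h₂tr : ∀ A B, B ∈ W₂ A → ∀ C, C ∈ W₂ B → C ∈ W₂ A)
    (h₂env : ∀ a b c d : ι, a ≠ b → a ≠ c → a ≠ d → b ≠ c → b ≠ d → c ≠ d →
      b ∈ W₂ a → d ∈ W₂ c → b ∈ W₂ c → (a ∈ W₂ c ∨ d ∈ W₂ a ∨ b ∈ W₂ d))
    (A : ι) (hA : (W₁ A \ W₂ A).Nonempty) :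
    ∃ o o' : ∀ i, D i,
      genRel (D := D) W₁ o o' ∧ ¬ genRel (D := D) W₂ o o' := by
  classical
  obtain ⟨B, hB1, hB2⟩ := hA
  have hBA : B ≠ A := fun h => h₁irr A (h ▸ hB1)
  obtain ⟨a', a, haa⟩ := exists_pair_lt (D A)
  obtain ⟨b, b', hbb⟩ := exists_pair_lt (D B)
  have base : ∀ i, D i := fun i => Classical.arbitrary (D i)
  set o : ∀ i, D i := Function.update (Function.update base B b) A a with ho
  set o' : ∀ i, D i := Function.update (Function.update base B b') A a' with ho'
  have hoA : o A = a := by simp [ho]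
  have ho'A : o' A = a' := by simp [ho']
  have hoB : o B = b := by simp [ho, Function.update_of_ne hBA]
  have ho'B : o' B = b' := by simp [ho', Function.update_of_ne hBA]
  have hagree : ∀ C : ι, C ≠ A → C ≠ B → o C = o' C := by
    intro C hCA hCB
    simp [ho, ho', Function.update_of_ne hCA, Function.update_of_ne hCB]
  refine ⟨o, o', ?_, ?_⟩
  · exact Relation.TransGen.single
      ⟨A, by rw [hoA, ho'A]; exact haa, fun C hC hCA => by
        have hCB : C ≠ B := fun h => hC (h ▸ hB1)
        exact hagree C hCA hCB⟩
  · intro hgen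
    obtain ⟨S, ⟨E₀, hE₀⟩, hwin, hcov⟩ := covQ_of_genRel W₂ h₂irr h₂tr hgen
    -- every element of S is A
    have hSA : ∀ E ∈ S, E = A := by
      intro E hE
      by_contra hEA
      by_cases hEB : E = B
      · subst hEB
        have := hwin E hE
        rw [hoB, ho'B] at this
        exact absurd hbb (asymm this)
      · have := hwin E hE
        rw [hagree E hEA hEB] at this
        exact lt_irrefl _ this
    have hBne : o B ≠ o' B := by rw [hoB, ho'B]; exact ne_of_lt hbb
    obtain ⟨E, hE, hBE⟩ := hcov B hBne
    have := hSA E hE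
    subst this
    rcases hBE with h | h
    · exact hBA h
    · exact hB2 h
end

section
/- For a full p-skyline relation ≻ with p-graph Γ, and distinct tuples o ≠ o', the following are equivalent: (1) o ≻ o'; (2) BetIn(o,o') ⊇ Top(o,o'); (3) Ch_Γ(BetIn(o,o')) ⊇ BetIn(o',o), where BetIn(x,y) is the set of attributes on which x is strictly better than y, Top(o,o') is the set of attributes where o,o' differ that have no Γ-ancestor among the differing attributes, and Ch_Γ(S) is the set of Γ-children of members of S. -/
/-!
Condition (3) says that every attribute on which `o` loses is a Γ-child of one on which it wins.
It holds for a single `q_A`-step, and it is transitive: a loss in either step of `o ≻ p ≻ o'`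
is pushed up along Γ until it meets a win of the composite, which happens because Γ is well
founded. Conversely, under (3) a Γ-minimal differing attribute `A` is a win, so copying `o'`
into `o` outside `A` and its children gives a tuple `p` with `p ≻ o'` by one `q_A`-step, and
the pair `(o, p)` still satisfies (3) with fewer differing attributes. Conditions (2) and (3) agree because every
differing attribute lies below (or is) a Γ-minimal differing one.
-/

/-- The full p-skyline relation with p-graph `Γ`:
`≻ = TC(⋃_A q_A)`, `q_A = { (o,o') : o.A >_A o'.A ∧ o,o' agree outside Ch_Γ(A) ∪ {A} }`. -/
def pskyRel {ι : Type*} {D : ι → Type*} [∀ i, LinearOrder (D i)]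
    (Γ : ι → ι → Prop) : (∀ i, D i) → (∀ i, D i) → Prop :=
  Relation.TransGen
    (fun o o' => ∃ A : ι, o' A < o A ∧ ∀ B : ι, ¬ Γ A B → B ≠ A → o B = o' B)

section DominanceTesting

variable {ι : Type*} {D : ι → Type*} {Γ : ι → ι → Prop}

section Splice

open Classical in
noncomputable def spliceBelow (Γ : ι → ι → Prop) (A : ι) (o o' : ∀ i, D i) : ∀ i, D i :=
  fun B => if Γ A B ∨ B = A then o B else o' B

theorem spliceBelow_of_not {A B : ι} {o o' : ∀ i, D i} (hB : ¬ (Γ A B ∨ B = A)) :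
    spliceBelow Γ A o o' B = o' B :=
  if_neg hB

theorem spliceBelow_of_ne {A B : ι} {o o' : ∀ i, D i} (hB : o B ≠ spliceBelow Γ A o o' B) :
    ¬ (Γ A B ∨ B = A) ∧ o B ≠ o' B := by
  have hout : ¬ (Γ A B ∨ B = A) := fun h => hB (if_pos h).symm
  rw [spliceBelow_of_not hout] at hB
  exact ⟨hout, hB⟩

end Splice

variable [∀ i, LinearOrder (D i)]

/-- The relation `⋃_A q_A` whose transitive closure is `pskyRel Γ`. -/
def pskyStep (Γ : ι → ι → Prop) (o o' : ∀ i, D i) : Prop :=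
  ∃ A : ι, o' A < o A ∧ ∀ B : ι, ¬ Γ A B → B ≠ A → o B = o' B

/-- `BetIn(o', o) ⊆ Ch_Γ(BetIn(o, o'))`. -/
def BetInCovered (Γ : ι → ι → Prop) (o o' : ∀ i, D i) : Prop :=
  ∀ A : ι, o A < o' A → ∃ C : ι, o' C < o C ∧ Γ C A

/-- `Top(o, o') ⊆ BetIn(o, o')`. -/
def TopInBetIn (Γ : ι → ι → Prop) (o o' : ∀ i, D i) : Prop :=
  ∀ A : ι, (o A ≠ o' A ∧ ¬ ∃ B : ι, o B ≠ o' B ∧ Γ B A) → o' A < o A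

theorem BetInCovered.of_pskyStep {o o' : ∀ i, D i} (h : pskyStep Γ o o') :
    BetInCovered Γ o o' := by
  obtain ⟨A₀, hwin, hagree⟩ := h
  intro A hA
  refine ⟨A₀, hwin, not_not.mp fun hΓ => ?_⟩
  obtain rfl | hne := eq_or_ne A A₀
  · exact hA.asymm hwin
  · exact hA.ne (hagree A hΓ hne)

theorem BetInCovered.trans [IsTrans ι Γ] (hwf : WellFounded Γ) {a b c : ∀ i, D i}
    (hab : BetInCovered Γ a b) (hbc : BetInCovered Γ b c) : BetInCovered Γ a c := by
  suffices key : ∀ A, (a A < b A ∨ b A < c A) → ∃ C, c C < a C ∧ Γ C A from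
    fun A hA => key A ((lt_or_ge (a A) (b A)).imp_right fun h => h.trans_lt hA)
  intro A
  induction A using hwf.induction with
  | _ A ih =>
    intro hA
    obtain ⟨C, hC, hCA⟩ : ∃ C, (b C < a C ∨ c C < b C) ∧ Γ C A := by
      rcases hA with h | h
      · obtain ⟨C, hC, hCA⟩ := hab A h
        exact ⟨C, Or.inl hC, hCA⟩
      · obtain ⟨C, hC, hCA⟩ := hbc A h
        exact ⟨C, Or.inr hC, hCA⟩
    by_cases hwin : c C < a C
    · exact ⟨C, hwin, hCA⟩
    · push Not at hwin
      obtain ⟨E, hE, hEC⟩ :=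
        ih C hCA (hC.symm.imp (fun h => hwin.trans_lt h) (fun h => h.trans_le hwin))
      exact ⟨E, hE, trans_of Γ hEC hCA⟩

theorem BetInCovered.of_pskyRel [IsTrans ι Γ] (hwf : WellFounded Γ)
    {o o' : ∀ i, D i} (h : pskyRel Γ o o') : BetInCovered Γ o o' := by
  induction h using Relation.TransGen.trans_induction_on with
  | single h => exact .of_pskyStep h
  | trans _ _ hab hbc => exact hab.trans hwf hbc

theorem pskyStep_spliceBelow {A : ι} {o o' : ∀ i, D i} (hA : o' A < o A) :
    pskyStep Γ (spliceBelow Γ A o o') o' :=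
  ⟨A, by rwa [spliceBelow, if_pos (Or.inr rfl)],
    fun _ hΓ hne => spliceBelow_of_not (by tauto)⟩

theorem BetInCovered.spliceBelow [IsTrans ι Γ] {A : ι} {o o' : ∀ i, D i}
    (h : BetInCovered Γ o o') : BetInCovered Γ o (spliceBelow Γ A o o') := by
  intro B hB
  have hout := (spliceBelow_of_ne hB.ne).1
  rw [spliceBelow_of_not hout] at hB
  obtain ⟨C, hC, hCB⟩ := h B hB
  have hCout : ¬ (Γ A C ∨ C = A) := by
    rintro (hAC | rfl)
    · exact hout (Or.inl (trans_of Γ hAC hCB))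
    · exact hout (Or.inl hCB)
  exact ⟨C, by rwa [spliceBelow_of_not hCout], hCB⟩

theorem pskyRel_of_betInCovered [Finite ι] [IsTrans ι Γ] (hwf : WellFounded Γ)
    {o o' : ∀ i, D i} (hne : o ≠ o') (h : BetInCovered Γ o o') : pskyRel Γ o o' := by
  induction hn : {B | o B ≠ o' B}.ncard using Nat.strong_induction_on generalizing o' with
  | _ n ih =>
    obtain ⟨A, hAdiff, hAmin⟩ := hwf.has_min {B | o B ≠ o' B} (Function.ne_iff.mp hne)
    have hA : o' A < o A := (Ne.lt_or_gt hAdiff).resolve_left fun hlt =>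
      have ⟨C, hC, hCA⟩ := h A hlt
      hAmin C hC.ne' hCA
    have hstep := pskyStep_spliceBelow (Γ := Γ) hA
    by_cases hsplice : o = spliceBelow Γ A o o'
    · exact .single (hsplice ▸ hstep)
    have hlt : {B | o B ≠ spliceBelow Γ A o o' B}.ncard < n := by
      refine hn ▸ Set.ncard_lt_ncard ⟨fun B hB => (spliceBelow_of_ne hB).2, fun hsub => ?_⟩
      exact (spliceBelow_of_ne (hsub hAdiff)).1 (Or.inr rfl)
    exact (ih _ hlt hsplice h.spliceBelow rfl).tail hstep

theorem topInBetIn_iff_betInCovered [IsTrans ι Γ] (hwf : WellFounded Γ)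
    {o o' : ∀ i, D i} : TopInBetIn Γ o o' ↔ BetInCovered Γ o o' := by
  refine ⟨fun h2 A hA => ?_, fun h3 A ⟨hdiff, htop⟩ => ?_⟩
  · obtain ⟨B, ⟨hBdiff, hBA⟩, hBmin⟩ :=
      hwf.has_min {B | o B ≠ o' B ∧ (Γ B A ∨ B = A)} ⟨A, hA.ne, Or.inr rfl⟩
    have hBwin : o' B < o B := h2 B ⟨hBdiff, fun ⟨C, hCdiff, hCB⟩ =>
      hBmin C ⟨hCdiff, Or.inl (hBA.elim (trans_of Γ hCB) (· ▸ hCB))⟩ hCB⟩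
    rcases hBA with hBA | rfl
    · exact ⟨B, hBwin, hBA⟩
    · exact absurd hA hBwin.asymm
  · refine (Ne.lt_or_gt hdiff).resolve_left fun hlt => ?_
    obtain ⟨C, hC, hCA⟩ := h3 A hlt
    exact htop ⟨C, hC.ne', hCA⟩

end DominanceTesting

theorem pskyline_dominance_testing_general {ι : Type*} [Fintype ι]
    {D : ι → Type*} [∀ i, LinearOrder (D i)]
    (Γ : ι → ι → Prop)
    (hirr : ∀ a, ¬ Γ a a)
    (htr : ∀ a b c, Γ a b → Γ b c → Γ a c)
    (o o' : ∀ i, D i) (hne : o ≠ o') :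
    (pskyRel (D := D) Γ o o' ↔
      ∀ A : ι, (o A ≠ o' A ∧ ¬ ∃ B : ι, o B ≠ o' B ∧ Γ B A) → o' A < o A) ∧
    (pskyRel (D := D) Γ o o' ↔
      ∀ A : ι, o A < o' A → ∃ C : ι, o' C < o C ∧ Γ C A) := by
  have : IsTrans ι Γ := ⟨htr⟩
  have : Std.Irrefl Γ := ⟨hirr⟩
  have hwf : WellFounded Γ := Finite.wellFounded_of_trans_of_irrefl Γ
  have hiff : pskyRel Γ o o' ↔ BetInCovered Γ o o' :=
    ⟨.of_pskyRel hwf, pskyRel_of_betInCovered hwf hne⟩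
  exact ⟨hiff.trans (topInBetIn_iff_betInCovered hwf).symm, hiff⟩

/-- dominance testing.  For distinct tuples `o ≠ o'`, each of the
following is equivalent to `o ≻ o'`:
(2) every attribute on which `o,o'` differ and that has no Γ-ancestor among the
differing attributes is one where `o` is better (`Top(o,o') ⊆ BetIn(o,o')`);
(3) every attribute on which `o'` is better is a Γ-child of an attribute on
which `o` is better (`BetIn(o',o) ⊆ Ch_Γ(BetIn(o,o'))`). -/
theorem pskyline_dominance_testing {ι : Type*} [Fintype ι]
    {D : ι → Type*} [∀ i, LinearOrder (D i)]
    (Γ : ι → ι → Prop)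
    (hirr : ∀ a, ¬ Γ a a)
    (htr : ∀ a b c, Γ a b → Γ b c → Γ a c)
    (henv : ∀ a b c d : ι, a ≠ b → a ≠ c → a ≠ d → b ≠ c → b ≠ d → c ≠ d →
      Γ a b → Γ c d → Γ c b → (Γ c a ∨ Γ a d ∨ Γ d b))
    (o o' : ∀ i, D i) (hne : o ≠ o') :
    (pskyRel (D := D) Γ o o' ↔
      ∀ A : ι, (o A ≠ o' A ∧ ¬ ∃ B : ι, o B ≠ o' B ∧ Γ B A) → o' A < o A) ∧
    (pskyRel (D := D) Γ o o' ↔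
      ∀ A : ι, o A < o' A → ∃ C : ι, o' C < o C ∧ Γ C A) :=
  pskyline_dominance_testing_general Γ hirr htr o o' hne
end

section
/- GeneralEnvelope: Let Γ be a p-graph (SPO + Envelope) and 𝐀, 𝐁, 𝐂, 𝐃 pairwise disjoint node sets each of which is a singleton or induces a subgraph of Γ that is a disjoint union of at least two weakly connected components. If every node of 𝐀 has an edge to every node of 𝐁, every node of 𝐂 to every node of 𝐃, and every node of 𝐂 to every node of 𝐁, then every node of 𝐂 has an edge to every node of 𝐀, or every node of 𝐀 to every node of 𝐃, or every node of 𝐃 to every node of 𝐁. -/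
/-- The subgraph of `Γ` induced by `S` is weakly connected. -/
def WeaklyConnectedOn {ι : Type*} (Γ : ι → ι → Prop) (S : Set ι) : Prop :=
  ∀ x ∈ S, ∀ y ∈ S,
    Relation.ReflTransGen (fun a b => a ∈ S ∧ b ∈ S ∧ (Γ a b ∨ Γ b a)) x y

/-- `S` is a singleton, or is nonempty and its induced subgraph is a disjoint
union of at least two weakly connected components (i.e. not weakly connected). -/
def SingletonOrDisconnected {ι : Type*} (Γ : ι → ι → Prop) (S : Set ι) : Prop :=
  (∃ a, S = {a}) ∨ (S.Nonempty ∧ ¬ WeaklyConnectedOn Γ S)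

/-!
Fix `c ∈ C` and `b ∈ B`. For a single node `a` with `Γ a b` and `¬ Γ c a`, the envelope puts
every `d ∈ D` under `a` or over `b`. A node not under `a` and a node not over `b` are joined by an
edge, and a node of `D` with no edge to either of them, which exists as `D` is disconnected,
contradicts the envelope; hence `a → D` or `D → b`. The same argument, run on the dichotomy
`Γ c a` or `a → D` over the nodes of the disconnected set `A`, replaces `a` by `A`.
-/

section

variable {ι : Type*} {Γ : ι → ι → Prop}

/-- Each coincidence among `a, b, c, d` makes one of the disjuncts a hypothesis or, for `b = c`,
a composite of two. -/
theorem envelope_of_transitive (htr : ∀ a b c, Γ a b → Γ b c → Γ a c)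
    (henv : ∀ a b c d : ι, a ≠ b → a ≠ c → a ≠ d → b ≠ c → b ≠ d → c ≠ d →
      Γ a b → Γ c d → Γ c b → (Γ c a ∨ Γ a d ∨ Γ d b))
    (a b c d : ι) (hab : Γ a b) (hcd : Γ c d) (hcb : Γ c b) : Γ c a ∨ Γ a d ∨ Γ d b := by
  rcases eq_or_ne a b with rfl | h₁; · exact Or.inl hcb
  rcases eq_or_ne a c with rfl | h₂; · exact Or.inr (Or.inl hcd)
  rcases eq_or_ne a d with rfl | h₃; · exact Or.inl hcd
  rcases eq_or_ne b c with rfl | h₄; · exact Or.inr (Or.inl (htr a b d hab hcd))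
  rcases eq_or_ne b d with rfl | h₅; · exact Or.inr (Or.inl hab)
  rcases eq_or_ne c d with rfl | h₆; · exact Or.inr (Or.inr hcb)
  exact henv a b c d h₁ h₂ h₃ h₄ h₅ h₆ hab hcd hcb

theorem SingletonOrDisconnected.exists_incompRel_of_rel {S : Set ι}
    (hS : SingletonOrDisconnected Γ S) {s t : ι} (hs : s ∈ S) (ht : t ∈ S) (hne : s ≠ t)
    (hst : Γ s t) : ∃ f ∈ S, IncompRel Γ f s ∧ IncompRel Γ f t := by
  rcases hS with ⟨x, rfl⟩ | ⟨-, hdisc⟩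
  · exact absurd (hs.trans ht.symm) hne
  by_contra! hcomp
  let R := fun a b => a ∈ S ∧ b ∈ S ∧ (Γ a b ∨ Γ b a)
  have hR : ∀ {a b}, a ∈ S → b ∈ S → ¬ IncompRel Γ a b → R a b ∧ R b a := by
    intro a b ha hb hab
    unfold IncompRel at hab
    exact ⟨⟨ha, hb, by tauto⟩, ⟨hb, ha, by tauto⟩⟩
  have hreach : ∀ f ∈ S, Relation.ReflTransGen R f s ∧ Relation.ReflTransGen R s f := by
    intro f hf
    by_cases hfs : IncompRel Γ f s
    · obtain ⟨hft, htf⟩ := hR hf ht (hcomp f hf hfs)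
      obtain ⟨hst, hts⟩ := hR hs ht fun h => h.1 hst
      exact ⟨.head hft (.single hts), .head hst (.single htf)⟩
    · obtain ⟨hfs, hsf⟩ := hR hf hs hfs
      exact ⟨.single hfs, .single hsf⟩
  exact hdisc fun x hx y hy => (hreach x hx).1.trans (hreach y hy).2

theorem envelope_right_of_singletonOrDisconnected
    (henv : ∀ a b c d : ι, Γ a b → Γ c d → Γ c b → Γ c a ∨ Γ a d ∨ Γ d b) {D : Set ι}
    (hD : SingletonOrDisconnected Γ D) {a b c : ι} (hab : Γ a b) (hcb : Γ c b)
    (hcD : ∀ d ∈ D, Γ c d) : Γ c a ∨ (∀ d ∈ D, Γ a d) ∨ ∀ d ∈ D, Γ d b := by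
  by_contra! ⟨hca, ⟨d₁, hd₁, had₁⟩, ⟨d₂, hd₂, hd₂b⟩⟩
  have split : ∀ d ∈ D, Γ a d ∨ Γ d b := fun d hd =>
    (henv a b c d hab (hcD d hd) hcb).resolve_left hca
  have hd₁b : Γ d₁ b := (split d₁ hd₁).resolve_left had₁
  have had₂ : Γ a d₂ := (split d₂ hd₂).resolve_right hd₂b
  have hd₁d₂ : Γ d₁ d₂ := by
    rcases henv d₁ b a d₂ hd₁b had₂ hab with h | h | h <;> tauto
  obtain ⟨f, hf, ⟨hfd₁, hd₁f⟩, ⟨hfd₂, hd₂f⟩⟩ :=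
    hD.exists_incompRel_of_rel hd₁ hd₂ (by rintro rfl; exact had₁ had₂) hd₁d₂
  have haf : ¬ Γ a f := fun haf => by
    rcases henv a f c d₁ haf (hcD d₁ hd₁) (hcD f hf) with h | h | h <;> contradiction
  rcases henv f b a d₂ ((split f hf).resolve_left haf) had₂ hab with h | h | h <;> contradiction

theorem envelope_of_singletonOrDisconnected
    (henv : ∀ a b c d : ι, Γ a b → Γ c d → Γ c b → Γ c a ∨ Γ a d ∨ Γ d b) {A D : Set ι}
    (hA : SingletonOrDisconnected Γ A) (hD : SingletonOrDisconnected Γ D) {b c : ι}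
    (hAb : ∀ a ∈ A, Γ a b) (hcb : Γ c b) (hcD : ∀ d ∈ D, Γ c d) :
    (∀ a ∈ A, Γ c a) ∨ (∀ a ∈ A, ∀ d ∈ D, Γ a d) ∨ ∀ d ∈ D, Γ d b := by
  by_contra! ⟨⟨a₀, ha₀, hca₀⟩, ⟨a₁, ha₁, d₁, hd₁, had₁⟩, ⟨d₂, hd₂, hd₂b⟩⟩
  have split : ∀ a ∈ A, Γ c a ∨ ∀ d ∈ D, Γ a d := fun a ha =>
    (envelope_right_of_singletonOrDisconnected henv hD (hAb a ha) hcb hcD).imp_right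
      fun h => h.resolve_right fun hDb => hd₂b (hDb d₂ hd₂)
  have ha₀D : ∀ d ∈ D, Γ a₀ d := (split a₀ ha₀).resolve_left hca₀
  have hca₁ : Γ c a₁ := (split a₁ ha₁).resolve_right fun h => had₁ (h d₁ hd₁)
  have ha₀a₁ : Γ a₀ a₁ := by
    rcases henv a₀ d₁ c a₁ (ha₀D d₁ hd₁) hca₁ (hcD d₁ hd₁) with h | h | h <;> tauto
  obtain ⟨f, hf, ⟨hfa₀, ha₀f⟩, ⟨hfa₁, ha₁f⟩⟩ :=
    hA.exists_incompRel_of_rel ha₀ ha₁ (by rintro rfl; exact hca₀ hca₁) ha₀a₁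
  have hcf : Γ c f := (split f hf).elim id fun hfD => by
    rcases henv f d₁ c a₁ (hfD d₁ hd₁) hca₁ (hcD d₁ hd₁) with h | h | h <;> tauto
  rcases henv a₀ a₁ c f ha₀a₁ hcf hca₁ with h | h | h <;> contradiction

end

theorem general_envelope_general {ι : Type*}
    (Γ : ι → ι → Prop)
    (htr : ∀ a b c, Γ a b → Γ b c → Γ a c)
    (henv : ∀ a b c d : ι, a ≠ b → a ≠ c → a ≠ d → b ≠ c → b ≠ d → c ≠ d →
      Γ a b → Γ c d → Γ c b → (Γ c a ∨ Γ a d ∨ Γ d b))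
    (SA SB SC SD : Set ι)
    (hA : SingletonOrDisconnected Γ SA)
    (hD : SingletonOrDisconnected Γ SD)
    (hABedge : ∀ a ∈ SA, ∀ b ∈ SB, Γ a b)
    (hCDedge : ∀ c ∈ SC, ∀ d ∈ SD, Γ c d)
    (hCBedge : ∀ c ∈ SC, ∀ b ∈ SB, Γ c b) :
    (∀ c ∈ SC, ∀ a ∈ SA, Γ c a) ∨
    (∀ a ∈ SA, ∀ d ∈ SD, Γ a d) ∨
    (∀ d ∈ SD, ∀ b ∈ SB, Γ d b) := by
  by_cases hCA : ∀ c ∈ SC, ∀ a ∈ SA, Γ c a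
  · exact Or.inl hCA
  by_cases hDB : ∀ d ∈ SD, ∀ b ∈ SB, Γ d b
  · exact Or.inr (Or.inr hDB)
  push Not at hCA hDB
  obtain ⟨c, hc, a, ha, hca⟩ := hCA
  obtain ⟨d, hd, b, hb, hdb⟩ := hDB
  rcases envelope_of_singletonOrDisconnected (envelope_of_transitive htr henv) hA hD
    (fun a ha => hABedge a ha b hb) (hCBedge c hc b hb) (hCDedge c hc) with h | h | h
  · exact absurd (h a ha) hca
  · exact Or.inr (Or.inl h)
  · exact absurd (h d hd) hdb

/-- GeneralEnvelope.  For a p-graph `Γ` and pairwise disjoint node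
sets `𝐀, 𝐁, 𝐂, 𝐃`, each a singleton or inducing a disconnected subgraph:
if `𝐀→𝐁`, `𝐂→𝐃` and `𝐂→𝐁` (all edges present), then `𝐂→𝐀` or `𝐀→𝐃` or `𝐃→𝐁`. -/
theorem general_envelope {ι : Type*} [Fintype ι]
    (Γ : ι → ι → Prop)
    (hirr : ∀ a, ¬ Γ a a)
    (htr : ∀ a b c, Γ a b → Γ b c → Γ a c)
    (henv : ∀ a b c d : ι, a ≠ b → a ≠ c → a ≠ d → b ≠ c → b ≠ d → c ≠ d →
      Γ a b → Γ c d → Γ c b → (Γ c a ∨ Γ a d ∨ Γ d b))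
    (SA SB SC SD : Set ι)
    (hAB : Disjoint SA SB) (hAC : Disjoint SA SC) (hAD : Disjoint SA SD)
    (hBC : Disjoint SB SC) (hBD : Disjoint SB SD) (hCD : Disjoint SC SD)
    (hA : SingletonOrDisconnected Γ SA) (hB : SingletonOrDisconnected Γ SB)
    (hC : SingletonOrDisconnected Γ SC) (hD : SingletonOrDisconnected Γ SD)
    (hABedge : ∀ a ∈ SA, ∀ b ∈ SB, Γ a b)
    (hCDedge : ∀ c ∈ SC, ∀ d ∈ SD, Γ c d)
    (hCBedge : ∀ c ∈ SC, ∀ b ∈ SB, Γ c b) :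
    (∀ c ∈ SC, ∀ a ∈ SA, Γ c a) ∨
    (∀ a ∈ SA, ∀ d ∈ SD, Γ a d) ∨
    (∀ d ∈ SD, ∀ b ∈ SB, Γ d b) :=
  general_envelope_general Γ htr henv SA SB SC SD hA hD hABedge hCDedge hCBedge
end

section
/- The skyline relation (Pareto accumulation of all atomic attribute preferences) is the least full p-skyline relation: its p-graph has empty edge set, and consequently for every finite set r of tuples and every full p-skyline relation ≻, the set of ≻-maximal tuples of r is contained in the set of skyline-maximal tuples of r. -/
/-- The skyline relation: better or equal on every attribute and strictly
better on at least one. -/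
def skyRel {ι : Type*} {D : ι → Type*} [∀ i, LinearOrder (D i)]
    (o o' : ∀ i, D i) : Prop :=
  (∀ i, o' i ≤ o i) ∧ ∃ i, o' i < o i

/-- Winnow: the best tuples of `r` w.r.t. a preference relation. -/
def winnow {U : Type*} (pref : U → U → Prop) (r : Set U) : Set U :=
  {t ∈ r | ¬ ∃ t' ∈ r, pref t' t}

theorem PExpr.vars_nonempty {ι : Type*} (e : PExpr ι) : e.vars.Nonempty := by
  induction e with
  | atom i => exact ⟨i, rfl⟩
  | prio e₁ e₂ ih₁ ih₂ => obtain ⟨i, hi⟩ := ih₁; exact ⟨i, Or.inl hi⟩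
  | pareto e₁ e₂ ih₁ ih₂ => obtain ⟨i, hi⟩ := ih₁; exact ⟨i, Or.inl hi⟩

theorem PExpr.rel_of_sky {ι : Type*} {D : ι → Type*} [∀ i, LinearOrder (D i)]
    (e : PExpr ι) {o o' : ∀ i, D i}
    (hle : ∀ i ∈ e.vars, o' i ≤ o i) (hlt : ∃ i ∈ e.vars, o' i < o i) :
    e.rel o o' := by
  induction e with
  | atom i =>
    obtain ⟨j, hj, h⟩ := hlt
    cases hj; exact h
  | prio e₁ e₂ ih₁ ih₂ =>
    by_cases h1 : ∃ i ∈ e₁.vars, o' i < o i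
    · exact Or.inl (ih₁ (fun i hi => hle i (Or.inl hi)) h1)
    · push_neg at h1
      have heq : ∀ i ∈ e₁.vars, o i = o' i := fun i hi =>
        le_antisymm (h1 i hi) (hle i (Or.inl hi))
      obtain ⟨j, hj, hjlt⟩ := hlt
      have hj2 : j ∈ e₂.vars := by
        cases hj with
        | inl h => exact absurd hjlt (not_lt.mpr (h1 j h))
        | inr h => exact h
      exact Or.inr ⟨heq, ih₂ (fun i hi => hle i (Or.inr hi)) ⟨j, hj2, hjlt⟩⟩
  | pareto e₁ e₂ ih₁ ih₂ =>
    by_cases h1 : ∃ i ∈ e₁.vars, o' i < o i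
      <;> by_cases h2 : ∃ i ∈ e₂.vars, o' i < o i
    · exact Or.inr (Or.inr ⟨ih₁ (fun i hi => hle i (Or.inl hi)) h1,
        ih₂ (fun i hi => hle i (Or.inr hi)) h2⟩)
    · push_neg at h2
      exact Or.inl ⟨ih₁ (fun i hi => hle i (Or.inl hi)) h1,
        fun i hi => le_antisymm (h2 i hi) (hle i (Or.inr hi))⟩
    · push_neg at h1
      exact Or.inr (Or.inl ⟨ih₂ (fun i hi => hle i (Or.inr hi)) h2,
        fun i hi => le_antisymm (h1 i hi) (hle i (Or.inl hi))⟩)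
    · push_neg at h1 h2
      obtain ⟨j, hj, hjlt⟩ := hlt
      cases hj with
      | inl h => exact absurd hjlt (not_lt.mpr (h1 j h))
      | inr h => exact absurd hjlt (not_lt.mpr (h2 j h))

theorem PExpr.sky_of_rel_empty {ι : Type*} {D : ι → Type*} [∀ i, LinearOrder (D i)]
    (e : PExpr ι) (he : e.edges = ∅) {o o' : ∀ i, D i} (h : e.rel o o') :
    (∀ i ∈ e.vars, o' i ≤ o i) ∧ ∃ i ∈ e.vars, o' i < o i := by
  induction e with
  | atom i => exact ⟨fun j hj => by cases hj; exact h.le, ⟨i, rfl, h⟩⟩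
  | prio e₁ e₂ ih₁ ih₂ =>
    exfalso
    obtain ⟨a, ha⟩ := e₁.vars_nonempty
    obtain ⟨b, hb⟩ := e₂.vars_nonempty
    have hmem : (a, b) ∈ (PExpr.prio e₁ e₂).edges := Or.inr ⟨ha, hb⟩
    rw [he] at hmem
    exact hmem
  | pareto e₁ e₂ ih₁ ih₂ =>
    have he' : e₁.edges = ∅ ∧ e₂.edges = ∅ := by
      have he' : e₁.edges ∪ e₂.edges = ∅ := he
      constructor <;> rw [Set.eq_empty_iff_forall_notMem] <;> intro x hx <;>
        [exact (he' ▸ Set.notMem_empty x) (Set.mem_union_left _ hx);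
         exact (he' ▸ Set.notMem_empty x) (Set.mem_union_right _ hx)]
    rcases h with ⟨h1, heq⟩ | ⟨h2, heq⟩ | ⟨h1, h2⟩
    · obtain ⟨hle1, j, hj, hjlt⟩ := ih₁ he'.1 h1
      exact ⟨fun i hi => hi.elim (hle1 i) (fun hi => (heq i hi).ge),
        ⟨j, Or.inl hj, hjlt⟩⟩
    · obtain ⟨hle2, j, hj, hjlt⟩ := ih₂ he'.2 h2
      exact ⟨fun i hi => hi.elim (fun hi => (heq i hi).ge) (hle2 i),
        ⟨j, Or.inr hj, hjlt⟩⟩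
    · obtain ⟨hle1, j, hj, hjlt⟩ := ih₁ he'.1 h1
      obtain ⟨hle2, _⟩ := ih₂ he'.2 h2
      exact ⟨fun i hi => hi.elim (hle1 i) (hle2 i), ⟨j, Or.inl hj, hjlt⟩⟩

/-- the skyline relation is the least full p-skyline relation:
it is the full p-skyline relation whose p-graph has empty edge set, it is
contained in every full p-skyline relation, and consequently for every finite
set of tuples the winnow of any full p-skyline relation is contained in the
skyline. -/
theorem skyline_least_pskyline {ι : Type*} [Fintype ι]
    {D : ι → Type*} [∀ i, LinearOrder (D i)] [∀ i, Infinite (D i)]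
    (e : PExpr ι) (hwf : e.wf) (hv : e.vars = Set.univ) :
    (e.edges = ∅ → ∀ o o' : ∀ i, D i, e.rel o o' ↔ skyRel o o') ∧
    (∀ o o' : ∀ i, D i, skyRel o o' → e.rel o o') ∧
    (∀ r : Set (∀ i, D i), r.Finite →
      winnow (e.rel (D := D)) r ⊆ winnow (skyRel (D := D)) r) := by
  have hsky : ∀ o o' : ∀ i, D i, skyRel o o' → e.rel o o' := by
    intro o o' ⟨hle, j, hj⟩
    exact e.rel_of_sky (fun i _ => hle i) ⟨j, by rw [hv]; trivial, hj⟩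
  refine ⟨?_, hsky, ?_⟩
  · intro he o o'
    constructor
    · intro h
      obtain ⟨hle, j, hj, hjlt⟩ := e.sky_of_rel_empty he h
      exact ⟨fun i => hle i (by rw [hv]; trivial), j, hjlt⟩
    · exact hsky o o'
  · intro r _ t ⟨ht, hn⟩
    exact ⟨ht, fun ⟨t', ht', hs⟩ => hn ⟨t', ht', hsky t' t hs⟩⟩
end

section
/- Constraint-system minimization preserves satisfaction by extensions: let ≻ be a full p-skyline relation with p-graph Γ satisfying a system 𝒩 of negative constraints, where a negative constraint τ = (L_τ, R_τ) is satisfied by a graph Γ' if Ch_{Γ'}(L_τ) ⊉ R_τ. Form 𝒩' by replacing each τ with τ' having L_{τ'} = L_τ and R_{τ'} = R_τ − { B ∈ R_τ : ∃ A ∈ L_τ, (A,B) ∈ Γ }. Then any full p-skyline relation ≻' extending ≻ (Γ ⊆ Γ_{≻'}) satisfies 𝒩 if and only if it satisfies 𝒩'. -/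
/-- constraint-system minimization preserves satisfaction by
extensions.  A negative constraint `τ = (L, R)` is satisfied by a graph `Γ'`
iff some `B ∈ R` has no `Γ'`-parent in `L`.  If the p-graph `Γ` satisfies every
constraint of `𝒩`, then any p-graph `Γ'` extending `Γ` satisfies `𝒩` iff it
satisfies the minimized system `𝒩'` obtained by removing from each right-hand
side the attributes that already have a `Γ`-parent in the left-hand side. -/
theorem minimize_negative_constraints {ι : Type*} [Fintype ι]
    (Γ Γ' : ι → ι → Prop)
    (hΓirr : ∀ a, ¬ Γ a a)
    (hΓtr : ∀ a b c, Γ a b → Γ b c → Γ a c)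
    (hΓenv : ∀ a b c d : ι, a ≠ b → a ≠ c → a ≠ d → b ≠ c → b ≠ d → c ≠ d →
      Γ a b → Γ c d → Γ c b → (Γ c a ∨ Γ a d ∨ Γ d b))
    (hΓ'irr : ∀ a, ¬ Γ' a a)
    (hΓ'tr : ∀ a b c, Γ' a b → Γ' b c → Γ' a c)
    (hΓ'env : ∀ a b c d : ι, a ≠ b → a ≠ c → a ≠ d → b ≠ c → b ≠ d → c ≠ d →
      Γ' a b → Γ' c d → Γ' c b → (Γ' c a ∨ Γ' a d ∨ Γ' d b))
    (hext : ∀ a b, Γ a b → Γ' a b)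
    (𝒩 : Set (Set ι × Set ι))
    (hsat : ∀ τ ∈ 𝒩, ∃ B ∈ τ.2, ∀ A ∈ τ.1, ¬ Γ A B) :
    (∀ τ ∈ 𝒩, ∃ B ∈ τ.2, ∀ A ∈ τ.1, ¬ Γ' A B) ↔
    (∀ τ ∈ 𝒩, ∃ B ∈ τ.2 \ {b : ι | ∃ A ∈ τ.1, Γ A b}, ∀ A ∈ τ.1, ¬ Γ' A B) := by
  constructor
  · intro h τ hτ
    obtain ⟨B, hB, hno⟩ := h τ hτ
    exact ⟨B, ⟨hB, fun ⟨A, hA, hAB⟩ => hno A hA (hext A B hAB)⟩, hno⟩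
  · intro h τ hτ
    obtain ⟨B, ⟨hB, _⟩, hno⟩ := h τ hτ
    exact ⟨B, hB, hno⟩
end
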